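/- arXiv:2510.07274 — 7 statements merged into one kernel-verified Lean document; each statement's English description precedes it below -/
import Mathlib

section
/- The α-evolutoid satisfies, for all s: γ_α'(s) = (ρ_α'(s) + cos α)·w(s), where w(s) = −c·sin_c(ρ_α(s))·γ(s) + cos_c(ρ_α(s))·v_α(s); moreover ⟨w(s), w(s)⟩_c = 1 for all s. -/
noncomputable section

open Real

/-- The bilinear form `⟨x,y⟩_c = c·x₁y₁ + x₂y₂ + x₃y₃` on `ℝ³`. -/
def ip (c : ℝ) (x y : ℝ × ℝ × ℝ) : ℝ :=
  c * x.1 * y.1 + x.2.1 * y.2.1 + x.2.2 * y.2.2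

/-- The product `x ∧_c y = (c(x₂y₃ − x₃y₂), x₃y₁ − x₁y₃, x₁y₂ − x₂y₁)`. -/
def wedge (c : ℝ) (x y : ℝ × ℝ × ℝ) : ℝ × ℝ × ℝ :=
  (c * (x.2.1 * y.2.2 - x.2.2 * y.2.1),
   x.2.2 * y.1 - x.1 * y.2.2,
   x.1 * y.2.1 - x.2.1 * y.1)

/-- `sin_c`: `sinh` when `c = -1`, `sin` when `c = 1`. -/
def sinc (c x : ℝ) : ℝ := if c = -1 then Real.sinh x else Real.sin x

/-- `cos_c`: `cosh` when `c = -1`, `cos` when `c = 1`. -/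
def cosc (c x : ℝ) : ℝ := if c = -1 then Real.cosh x else Real.cos x

/-- `tan_c = sin_c / cos_c`. -/
def tanc (c x : ℝ) : ℝ := sinc c x / cosc c x

/-- Inverse hyperbolic tangent. -/
def arctanh (x : ℝ) : ℝ := Real.log ((1 + x) / (1 - x)) / 2

/-- `arctan_c`: `arctanh` when `c = -1`, `arctan` when `c = 1`. -/
def arctanc (c x : ℝ) : ℝ := if c = -1 then arctanh x else Real.arctan x

/- ## Auxiliary algebraic lemmas -/

lemma ip_comm (c : ℝ) (x y : ℝ × ℝ × ℝ) : ip c x y = ip c y x := by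
  simp only [ip]; ring

lemma wedge_anticomm (c : ℝ) (x y : ℝ × ℝ × ℝ) : wedge c x y = -(wedge c y x) := by
  refine Prod.ext ?_ (Prod.ext ?_ ?_) <;> simp only [wedge, Prod.fst_neg, Prod.snd_neg] <;> ring

lemma wedge_smul_right (c r : ℝ) (x y : ℝ × ℝ × ℝ) :
    wedge c x (r • y) = r • wedge c x y := by
  refine Prod.ext ?_ (Prod.ext ?_ ?_) <;>
    simp only [wedge, Prod.smul_fst, Prod.smul_snd, smul_eq_mul] <;> ring


lemma wedge_self (c : ℝ) (x : ℝ × ℝ × ℝ) : wedge c x x = 0 := by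
  refine Prod.ext ?_ (Prod.ext ?_ ?_) <;>
    simp only [wedge, Prod.fst_zero, Prod.snd_zero] <;> ring

lemma wedge_sub_smul (c p q : ℝ) (x y z : ℝ × ℝ × ℝ) :
    wedge c x (p • y - q • z) = p • wedge c x y - q • wedge c x z := by
  refine Prod.ext ?_ (Prod.ext ?_ ?_) <;>
    simp only [wedge, Prod.smul_fst, Prod.smul_snd, Prod.fst_sub, Prod.snd_sub,
      smul_eq_mul] <;> ring

lemma wedge_wedge {c : ℝ} (hc : c * c = 1) (x y z : ℝ × ℝ × ℝ) :
    wedge c x (wedge c y z) = (c * ip c x z) • y - (c * ip c x y) • z := by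
  rcases mul_self_eq_one_iff.mp hc with h | h <;> subst h <;>
    refine Prod.ext ?_ (Prod.ext ?_ ?_) <;>
    simp only [wedge, ip, Prod.smul_fst, Prod.smul_snd, Prod.fst_sub, Prod.snd_sub,
      smul_eq_mul] <;> ring

lemma ip_wedge_left {c : ℝ} (hc : c * c = 1) (x y : ℝ × ℝ × ℝ) :
    ip c x (wedge c x y) = 0 := by
  rcases mul_self_eq_one_iff.mp hc with h | h <;> subst h <;> simp only [ip, wedge] <;> ring

lemma ip_wedge_right {c : ℝ} (hc : c * c = 1) (x y : ℝ × ℝ × ℝ) :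
    ip c y (wedge c x y) = 0 := by
  rcases mul_self_eq_one_iff.mp hc with h | h <;> subst h <;> simp only [ip, wedge] <;> ring

lemma ip_wedge_wedge {c : ℝ} (hc : c * c = 1) (x y : ℝ × ℝ × ℝ) :
    ip c (wedge c x y) (wedge c x y) = c * (ip c x x * ip c y y - (ip c x y) ^ 2) := by
  rcases mul_self_eq_one_iff.mp hc with h | h <;> subst h <;>
    simp only [ip, wedge] <;> ring

/-- Frame decomposition: a vector orthogonal to `t` with `⟨u,γ⟩ = -1` equals
`⟨u,e⟩ e - c γ`. -/
lemma frame_decomp {c : ℝ} (hc : c * c = 1) (g tt u : ℝ × ℝ × ℝ)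
    (hgg : ip c g g = c) (htt : ip c tt tt = 1) (hgt : ip c g tt = 0)
    (hug : ip c u g = -1) (hut : ip c u tt = 0) :
    u = (ip c u (wedge c g tt)) • wedge c g tt - c • g := by
  set e := wedge c g tt with he
  have h1 : wedge c u e = c • tt := by
    rw [he, wedge_wedge hc, hut, hug]; module
  have h2 : wedge c e u = -(c • tt) := by rw [wedge_anticomm, h1]
  have h3 : wedge c e tt = -(c • g) := by
    rw [he, wedge_anticomm, wedge_wedge hc, htt, ip_comm c tt g, hgt]
    module
  have hee : ip c e e = 1 := by
    rw [he, ip_wedge_wedge hc, hgg, htt, hgt]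
    linear_combination hc
  have h4 : wedge c e (wedge c e u) = g := by
    rw [h2, show -(c • tt) = (-c) • tt by module, wedge_smul_right, h3]
    match_scalars
    linear_combination hc
  rw [wedge_wedge hc, hee, ip_comm c e u, mul_one] at h4
  -- h4 : (c * ip c u e) • e - c • u = g
  have h7 := congrArg (fun z => (c:ℝ) • z) h4
  simp only [smul_sub, smul_smul,
    show c * (c * ip c u e) = (c * c) * ip c u e from by ring, hc, one_mul, one_smul] at h7
  -- h7 : (ip c u e) • e - u = c • g
  rw [sub_eq_iff_eq_add] at h7
  rw [eq_sub_iff_add_eq, h7]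
  abel

/- ## Derivative lemmas -/

lemma hasDerivAt_ip {c : ℝ} {f g : ℝ → ℝ × ℝ × ℝ} {f' g' : ℝ × ℝ × ℝ} {s : ℝ}
    (hf : HasDerivAt f f' s) (hg : HasDerivAt g g' s) :
    HasDerivAt (fun x => ip c (f x) (g x)) (ip c f' (g s) + ip c (f s) g') s := by
  have f1 : HasDerivAt (fun x => (f x).1) f'.1 s := hf.fst
  have f2 : HasDerivAt (fun x => (f x).2.1) f'.2.1 s := hf.snd.fst
  have f3 : HasDerivAt (fun x => (f x).2.2) f'.2.2 s := hf.snd.snd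
  have g1 : HasDerivAt (fun x => (g x).1) g'.1 s := hg.fst
  have g2 : HasDerivAt (fun x => (g x).2.1) g'.2.1 s := hg.snd.fst
  have g3 : HasDerivAt (fun x => (g x).2.2) g'.2.2 s := hg.snd.snd
  simp only [ip]
  have h := (((f1.const_mul c).mul g1).add (f2.mul g2)).add (f3.mul g3)
  refine h.congr_deriv ?_
  ring

lemma hasDerivAt_wedge {c : ℝ} {f g : ℝ → ℝ × ℝ × ℝ} {f' g' : ℝ × ℝ × ℝ} {s : ℝ}
    (hf : HasDerivAt f f' s) (hg : HasDerivAt g g' s) :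
    HasDerivAt (fun x => wedge c (f x) (g x)) (wedge c f' (g s) + wedge c (f s) g') s := by
  have f1 : HasDerivAt (fun x => (f x).1) f'.1 s := hf.fst
  have f2 : HasDerivAt (fun x => (f x).2.1) f'.2.1 s := hf.snd.fst
  have f3 : HasDerivAt (fun x => (f x).2.2) f'.2.2 s := hf.snd.snd
  have g1 : HasDerivAt (fun x => (g x).1) g'.1 s := hg.fst
  have g2 : HasDerivAt (fun x => (g x).2.1) g'.2.1 s := hg.snd.fst
  have g3 : HasDerivAt (fun x => (g x).2.2) g'.2.2 s := hg.snd.snd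
  simp only [wedge]
  have h1 := ((f2.mul g3).sub (f3.mul g2)).const_mul c
  have h2 := (f3.mul g1).sub (f1.mul g3)
  have h3 := (f1.mul g2).sub (f2.mul g1)
  have h := h1.prodMk (h2.prodMk h3)
  convert h using 1
  · rfl
  refine Prod.ext ?_ (Prod.ext ?_ ?_) <;>
    simp only [wedge, Prod.fst_add, Prod.snd_add] <;> ring

lemma tanh_arctanh' {x : ℝ} (h0 : -1 < x) (h1 : x < 1) :
    Real.sinh (arctanh x) = x * Real.cosh (arctanh x) := by
  have hx1 : (0:ℝ) < 1 - x := by linarith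
  have hx2 : (0:ℝ) < 1 + x := by linarith
  have hA : (0:ℝ) < (1 + x) / (1 - x) := div_pos hx2 hx1
  set y := arctanh x with hy
  have hE : Real.exp y * Real.exp y = (1 + x) / (1 - x) := by
    rw [← Real.exp_add, hy, arctanh]
    rw [show Real.log ((1+x)/(1-x)) / 2 + Real.log ((1+x)/(1-x)) / 2
        = Real.log ((1+x)/(1-x)) by ring]
    exact Real.exp_log hA
  have hEpos : (0:ℝ) < Real.exp y := Real.exp_pos y
  rw [eq_div_iff hx1.ne'] at hE
  rw [Real.sinh_eq, Real.cosh_eq]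
  rw [Real.exp_neg]
  field_simp
  linear_combination hE

theorem evolutoid_derivative
    (c : ℝ) (hc : c ∈ ({-1, 1} : Set ℝ))
    (γ : ℝ → ℝ × ℝ × ℝ) (hγ : ContDiff ℝ (⊤ : ℕ∞) γ)
    (hγM : ∀ s, ip c (γ s) (γ s) = c)
    (hunit : ∀ s, ip c (deriv γ s) (deriv γ s) = 1)
    (t : ℝ → ℝ × ℝ × ℝ) (ht : t = deriv γ)
    (e : ℝ → ℝ × ℝ × ℝ) (he : ∀ s, e s = wedge c (γ s) (t s))
    (k : ℝ → ℝ) (hk : ∀ s, k s = ip c (deriv (deriv γ) s) (e s))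
    (α : ℝ) (hα : α ∈ Set.Icc 0 (Real.pi / 2))
    (a b : ℝ) (ha : a = Real.cos α) (hb : b = Real.sin α)
    (v : ℝ → ℝ × ℝ × ℝ) (hv : ∀ s, v s = a • t s + b • e s)
    (hconv₁ : c = 1 → ∀ s, 0 < k s) (hconv₂ : c = -1 → ∀ s, 1 < k s)
    (ρ : ℝ → ℝ) (hρ : ∀ s, ρ s = arctanc c (b / k s))
    (γα : ℝ → ℝ × ℝ × ℝ)
    (hγα : ∀ s, γα s = cosc c (ρ s) • γ s + sinc c (ρ s) • v s)
    (w : ℝ → ℝ × ℝ × ℝ)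
    (hw : ∀ s, w s = (-(c * sinc c (ρ s))) • γ s + cosc c (ρ s) • v s) :
    ∀ s, deriv γα s = (deriv ρ s + Real.cos α) • w s ∧ ip c (w s) (w s) = 1 := by
  simp only [Set.mem_insert_iff, Set.mem_singleton_iff] at hc
  have hcc : c * c = 1 := by rcases hc with h | h <;> rw [h] <;> norm_num
  -- smoothness facts
  have hγd : Differentiable ℝ γ := (contDiff_infty_iff_deriv.mp (hγ.of_le (by simp))).1
  have htcd : ContDiff ℝ (⊤:ℕ∞) (deriv γ) := (contDiff_infty_iff_deriv.mp (hγ.of_le (by simp))).2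
  have htd : Differentiable ℝ t := ht ▸ (contDiff_infty_iff_deriv.mp htcd).1
  have hucd : ContDiff ℝ (⊤:ℕ∞) (deriv (deriv γ)) := (contDiff_infty_iff_deriv.mp htcd).2
  have hud : Differentiable ℝ (deriv t) := by rw [ht]; exact (contDiff_infty_iff_deriv.mp hucd).1
  set u : ℝ → ℝ × ℝ × ℝ := deriv t with hu
  have hdγ : ∀ σ, HasDerivAt γ (t σ) σ := fun σ => ht ▸ (hγd σ).hasDerivAt
  have hdt : ∀ σ, HasDerivAt t (u σ) σ := fun σ => (htd σ).hasDerivAt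
  -- Frenet scalar identities
  have hitt : ∀ σ, ip c (t σ) (t σ) = 1 := fun σ => by rw [ht]; exact hunit σ
  have higt : ∀ σ, ip c (γ σ) (t σ) = 0 := by
    intro σ
    have h1 : HasDerivAt (fun x => ip c (γ x) (γ x)) (ip c (t σ) (γ σ) + ip c (γ σ) (t σ)) σ :=
      hasDerivAt_ip (hdγ σ) (hdγ σ)
    have h2 : HasDerivAt (fun x => ip c (γ x) (γ x)) 0 σ := by
      have : (fun x => ip c (γ x) (γ x)) = fun _ => c := funext hγM
      rw [this]; exact hasDerivAt_const σ c
    have h3 := h1.unique h2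
    have h4 := ip_comm c (γ σ) (t σ)
    linarith
  have hiug : ∀ σ, ip c (u σ) (γ σ) = -1 := by
    intro σ
    have h1 : HasDerivAt (fun x => ip c (t x) (γ x)) (ip c (u σ) (γ σ) + ip c (t σ) (t σ)) σ :=
      hasDerivAt_ip (hdt σ) (hdγ σ)
    have h2 : HasDerivAt (fun x => ip c (t x) (γ x)) 0 σ := by
      have : (fun x => ip c (t x) (γ x)) = fun _ => 0 := by
        funext x; rw [ip_comm]; exact higt x
      rw [this]; exact hasDerivAt_const σ 0
    have h3 := h1.unique h2
    have h4 := hitt σ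
    linarith
  have hiut : ∀ σ, ip c (u σ) (t σ) = 0 := by
    intro σ
    have h1 : HasDerivAt (fun x => ip c (t x) (t x)) (ip c (u σ) (t σ) + ip c (t σ) (u σ)) σ :=
      hasDerivAt_ip (hdt σ) (hdt σ)
    have h2 : HasDerivAt (fun x => ip c (t x) (t x)) 0 σ := by
      have : (fun x => ip c (t x) (t x)) = fun _ => 1 := funext hitt
      rw [this]; exact hasDerivAt_const σ 1
    have h3 := h1.unique h2
    have h4 := ip_comm c (u σ) (t σ)
    linarith
  have hk' : ∀ σ, k σ = ip c (u σ) (e σ) := by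
    intro σ; rw [hk, hu, ht]
  -- Frenet vector identity
  have hFrenet : ∀ σ, u σ = (k σ) • e σ - c • γ σ := by
    intro σ
    have := frame_decomp hcc (γ σ) (t σ) (u σ) (hγM σ) (hitt σ) (higt σ) (hiug σ) (hiut σ)
    rw [← he σ] at this
    rw [this, ← hk' σ, he σ]
  -- more scalar products
  have hige : ∀ σ, ip c (γ σ) (e σ) = 0 := fun σ => by rw [he]; exact ip_wedge_left hcc _ _
  have hite : ∀ σ, ip c (t σ) (e σ) = 0 := fun σ => by rw [he]; exact ip_wedge_right hcc _ _
  have hiee : ∀ σ, ip c (e σ) (e σ) = 1 := by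
    intro σ
    rw [he, ip_wedge_wedge hcc, hγM σ, hitt σ, higt σ]
    linear_combination hcc
  -- positivity / bounds
  have hb0 : 0 ≤ b := hb ▸ Real.sin_nonneg_of_nonneg_of_le_pi hα.1
    (le_trans hα.2 (by linarith [Real.pi_pos]))
  have hb1 : b ≤ 1 := hb ▸ Real.sin_le_one α
  have hkpos : ∀ σ, 0 < k σ := by
    rcases hc with h | h
    · intro σ; linarith [hconv₂ h σ]
    · exact hconv₁ h
  intro s
  have hkne : k s ≠ 0 := (hkpos s).ne'
  -- differentiability of k
  have hkfun : k = fun x => ip c (u x) (e x) := funext hk'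
  have hefun : e = fun x => wedge c (γ x) (t x) := funext he
  have hde : ∀ σ, HasDerivAt e (wedge c (t σ) (t σ) + wedge c (γ σ) (u σ)) σ := by
    intro σ
    rw [hefun]
    exact hasDerivAt_wedge (hdγ σ) (hdt σ)
  have hkdiff : DifferentiableAt ℝ k s := by
    rw [hkfun]
    exact (hasDerivAt_ip ((hud s).hasDerivAt) (hde s)).differentiableAt
  have hqdiff : DifferentiableAt ℝ (fun x => b / k x) s :=
    (differentiableAt_const b).div hkdiff hkne
  have hρfun : ρ = fun x => arctanc c (b / k x) := funext hρ
  -- differentiability of ρ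
  have hρdiff : DifferentiableAt ℝ ρ s := by
    rw [hρfun]
    rcases hc with h | h
    · -- c = -1 : arctanh
      have hks := hconv₂ h s
      have hblt : b / k s < 1 := (div_lt_one (by linarith)).mpr (by linarith)
      have hbge : 0 ≤ b / k s := div_nonneg hb0 (by linarith)
      have harc : (fun x => arctanc c (b / k x))
          = fun x => Real.log ((1 + b / k x) / (1 - b / k x)) / 2 := by
        funext x; rw [arctanc, if_pos h, arctanh]
      rw [harc]
      have h1 : DifferentiableAt ℝ (fun x => (1 + b / k x) / (1 - b / k x)) s := by
        refine DifferentiableAt.div ((differentiableAt_const 1).add hqdiff)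
          ((differentiableAt_const 1).sub hqdiff) ?_
        exact ne_of_gt (by linarith)
      have h2 : (1 + b / k s) / (1 - b / k s) ≠ 0 :=
        ne_of_gt (div_pos (by linarith) (by linarith))
      exact (h1.log h2).div_const 2
    · -- c = 1 : arctan
      have hne : c ≠ -1 := by rw [h]; norm_num
      simp only [arctanc, if_neg hne]
      exact hqdiff.arctan
  have hρd : HasDerivAt ρ (deriv ρ s) s := hρdiff.hasDerivAt
  set S := sinc c (ρ s) with hS
  set C := cosc c (ρ s) with hC
  set ρ' := deriv ρ s with hρ'
  -- key identity  k s * S = b * C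
  have hkey : k s * S = b * C := by
    rcases hc with h | h
    · -- c = -1
      have hks := hconv₂ h s
      have hblt : b / k s < 1 := (div_lt_one (by linarith)).mpr (by linarith)
      have hbge : 0 ≤ b / k s := div_nonneg hb0 (by linarith)
      have := tanh_arctanh' (x := b / k s) (by linarith) hblt
      rw [hS, hC, hρ s]
      simp only [arctanc, if_pos h, _root_.sinc, cosc, if_pos h]
      rw [this]
      field_simp
    · -- c = 1
      have hne : c ≠ -1 := by rw [h]; norm_num
      have hρs : ρ s = Real.arctan (b / k s) := by rw [hρ s]; simp [arctanc, hne]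
      have htan := Real.tan_arctan (b / k s)
      rw [Real.tan_eq_sin_div_cos] at htan
      have hcos : Real.cos (Real.arctan (b / k s)) ≠ 0 := (Real.cos_arctan_pos _).ne'
      rw [hS, hC, hρs]
      simp only [_root_.sinc, cosc, if_neg hne]
      field_simp at htan
      linear_combination htan
  -- trig pythagoras
  have htrig : c * S ^ 2 + C ^ 2 = 1 := by
    rcases hc with h | h
    · have h1 : S = Real.sinh (ρ s) := by rw [hS, _root_.sinc, if_pos h]
      have h2 : C = Real.cosh (ρ s) := by rw [hC, cosc, if_pos h]
      rw [h1, h2, h]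
      have h3 := Real.cosh_sq_sub_sinh_sq (ρ s)
      nlinarith [h3]
    · have hne : c ≠ -1 := by rw [h]; norm_num
      have h1 : S = Real.sin (ρ s) := by rw [hS, _root_.sinc, if_neg hne]
      have h2 : C = Real.cos (ρ s) := by rw [hC, cosc, if_neg hne]
      rw [h1, h2, h]
      have h3 := Real.sin_sq_add_cos_sq (ρ s)
      nlinarith [h3]
  -- derivatives of sinc∘ρ and cosc∘ρ
  have hSd : HasDerivAt (fun x => sinc c (ρ x)) (C * ρ') s := by
    rcases hc with h | h
    · have h1 : (fun x => sinc c (ρ x)) = fun x => Real.sinh (ρ x) := by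
        funext x; rw [_root_.sinc, if_pos h]
      have h2 : C = Real.cosh (ρ s) := by rw [hC, cosc, if_pos h]
      rw [h1, h2]
      exact hρd.sinh
    · have hne : c ≠ -1 := by rw [h]; norm_num
      have h1 : (fun x => sinc c (ρ x)) = fun x => Real.sin (ρ x) := by
        funext x; rw [_root_.sinc, if_neg hne]
      have h2 : C = Real.cos (ρ s) := by rw [hC, cosc, if_neg hne]
      rw [h1, h2]
      exact hρd.sin
  have hCd : HasDerivAt (fun x => cosc c (ρ x)) (-(c * S) * ρ') s := by
    rcases hc with h | h
    · have h1 : (fun x => cosc c (ρ x)) = fun x => Real.cosh (ρ x) := by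
        funext x; rw [cosc, if_pos h]
      have h2 : S = Real.sinh (ρ s) := by rw [hS, _root_.sinc, if_pos h]
      rw [h1, h2, h]
      have h3 := hρd.cosh
      convert h3 using 1; ring
    · have hne : c ≠ -1 := by rw [h]; norm_num
      have h1 : (fun x => cosc c (ρ x)) = fun x => Real.cos (ρ x) := by
        funext x; rw [cosc, if_neg hne]
      have h2 : S = Real.sin (ρ s) := by rw [hS, _root_.sinc, if_neg hne]
      rw [h1, h2, h]
      have h3 := hρd.cos
      convert h3 using 1; ring
  -- derivative of v
  have hvfun : v = fun x => a • t x + b • e x := funext hv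
  have hdv : HasDerivAt v (a • u s + b • (wedge c (t s) (t s) + wedge c (γ s) (u s))) s := by
    rw [hvfun]
    have h := ((hasDerivAt_const s a).smul (hdt s)).add
      ((hasDerivAt_const s b).smul (hde s))
    refine h.congr_deriv ?_
    simp only [zero_smul, add_zero]
  -- derivative of γα
  have hγαfun : γα = fun x => cosc c (ρ x) • γ x + sinc c (ρ x) • v x := funext hγα
  have hdγα : HasDerivAt γα
      ((C • t s + (-(c * S) * ρ') • γ s) + (S • (a • u s + b • (wedge c (t s) (t s) + wedge c (γ s) (u s))) + (C * ρ') • v s)) s := by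
    rw [hγαfun]
    exact (hCd.smul (hdγ s)).add (hSd.smul hdv)
  have hderiv := hdγα.deriv
  -- wedge computations
  have hge : wedge c (γ s) (e s) = -(t s) := by
    rw [he s, wedge_wedge hcc, higt s, hγM s, hcc]
    module
  have hgu : wedge c (γ s) (u s) = (-(k s)) • t s := by
    rw [hFrenet s, wedge_sub_smul, hge, wedge_self]
    module
  have hab : a ^ 2 + b ^ 2 = 1 := by
    rw [ha, hb]; linarith [Real.sin_sq_add_cos_sq α]
  constructor
  · rw [hderiv, hw s, hv s, ← ha, hgu, wedge_self, hFrenet s]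
    match_scalars
    · rw [← hC]
      linear_combination (-b) * hkey + (-C) * hab
    · rw [← hS]
      ring
    · rw [← hC]
      linear_combination a * hkey
  · -- norm of w
    rw [hw s, hv s, ← hS, ← hC]
    have e1 := hγM s
    have e2 := hitt s
    have e3 := higt s
    have e4 := hige s
    have e5 := hite s
    have e6 := hiee s
    simp only [ip, Prod.smul_fst, Prod.smul_snd, Prod.fst_add, Prod.snd_add,
      smul_eq_mul] at e1 e2 e3 e4 e5 e6 ⊢
    linear_combination (norm := ring_nf) (c*S)^2 * e1 + C^2*a^2 * e2 +
      (2*a*(-(c*S))*C) * e3 + (2*b*(-(c*S))*C) * e4 + 2*a*b*C^2 * e5 + C^2*b^2 * e6 +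
      C^2 * hab + htrig + c*S^2 * hcc
end
end

section
/- For every s, the α-evolutoid is regular at s if and only if ρ_α'(s) ≠ −cos α; that is, γ_α'(s) ≠ 0 ⟺ ρ_α'(s) ≠ −cos α. -/
noncomputable section

open Real

namespace Evo

lemma prod3_ext {p q : ℝ × ℝ × ℝ} (h1 : p.1 = q.1) (h2 : p.2.1 = q.2.1) (h3 : p.2.2 = q.2.2) : p = q := by
  obtain ⟨a, b, c⟩ := p; obtain ⟨d, e, f⟩ := q; simp_all

lemma wedge_self (c : ℝ) (x : ℝ × ℝ × ℝ) : wedge c x x = 0 := by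
  refine prod3_ext ?_ ?_ ?_ <;>
    simp only [wedge, Prod.fst_zero, Prod.snd_zero] <;> ring

lemma ip_wedge_left (c : ℝ) (hc : c = -1 ∨ c = 1) (x y : ℝ × ℝ × ℝ) :
    ip c (wedge c x y) x = 0 := by
  rcases hc with h | h <;> subst h <;> simp only [ip, wedge] <;> ring

lemma ip_wedge_right (c : ℝ) (hc : c = -1 ∨ c = 1) (x y : ℝ × ℝ × ℝ) :
    ip c (wedge c x y) y = 0 := by
  rcases hc with h | h <;> subst h <;> simp only [ip, wedge] <;> ring

lemma ip_wedge_self (c : ℝ) (hc : c = -1 ∨ c = 1) (x y : ℝ × ℝ × ℝ) :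
    ip c (wedge c x y) (wedge c x y) = c * (ip c x x * ip c y y - ip c x y ^ 2) := by
  rcases hc with h | h <;> subst h <;> simp only [ip, wedge] <;> ring

lemma smul3 (r : ℝ) (x : ℝ × ℝ × ℝ) : r • x = (r * x.1, r * x.2.1, r * x.2.2) := rfl

lemma wedge_wedge (c : ℝ) (hc : c = -1 ∨ c = 1) (x y : ℝ × ℝ × ℝ) :
    wedge c x (wedge c x y) = (c * ip c x y) • x - (c * ip c x x) • y := by
  rcases hc with h | h <;> subst h <;>
    refine prod3_ext ?_ ?_ ?_ <;>
    simp only [ip, wedge, smul3, Prod.fst_sub, Prod.snd_sub] <;> ring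

lemma master (c : ℝ) (hc : c = -1 ∨ c = 1) (x y u : ℝ × ℝ × ℝ) :
    ip c (wedge c x y) (wedge c x y) • u =
      (c * (ip c u x * ip c y y - ip c u y * ip c x y)) • x +
      (c * (ip c u y * ip c x x - ip c u x * ip c x y)) • y +
      ip c u (wedge c x y) • wedge c x y := by
  rcases hc with h | h <;> subst h <;>
    refine prod3_ext ?_ ?_ ?_ <;>
    simp only [ip, wedge, smul3, Prod.fst_add, Prod.snd_add] <;> ring

lemma ip_comb (c A B C A' B' C' : ℝ) (x y z : ℝ × ℝ × ℝ) :
    ip c (A • x + B • y + C • z) (A' • x + B' • y + C' • z) =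
      A * A' * ip c x x + B * B' * ip c y y + C * C' * ip c z z +
      (A * B' + B * A') * ip c x y + (A * C' + C * A') * ip c x z +
      (B * C' + C * B') * ip c y z := by
  simp only [ip, smul3, Prod.fst_add, Prod.snd_add]; ring

lemma wedge_comb (c A B : ℝ) (x y z : ℝ × ℝ × ℝ) :
    wedge c x (A • y + B • z) = A • wedge c x y + B • wedge c x z := by
  refine prod3_ext ?_ ?_ ?_ <;>
    simp only [wedge, smul3, Prod.fst_add, Prod.snd_add] <;> ring


lemma ip_comm (c : ℝ) (x y : ℝ × ℝ × ℝ) : ip c x y = ip c y x := by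
  simp only [ip]; ring

variable {f g : ℝ → ℝ × ℝ × ℝ} {f' g' : ℝ × ℝ × ℝ} {x : ℝ}

lemma cosc_neg : cosc (-1) = Real.cosh := funext fun z => by simp [cosc]
lemma cosc_one : cosc 1 = Real.cos := funext fun z => by norm_num [cosc]
lemma sinc_neg : _root_.sinc (-1) = Real.sinh := funext fun z => by simp [_root_.sinc]
lemma sinc_one : _root_.sinc 1 = Real.sin := funext fun z => by norm_num [_root_.sinc]
lemma arctanc_neg : arctanc (-1) = arctanh := funext fun z => by simp [arctanc]
lemma arctanc_one : arctanc 1 = Real.arctan := funext fun z => by norm_num [arctanc]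
lemma arctanh_def : arctanh = fun z => Real.log ((1 + z) / (1 - z)) / 2 := rfl

lemma hd_c1 (h : HasDerivAt f f' x) : HasDerivAt (fun y => (f y).1) f'.1 x := by
  simpa using h.hasFDerivAt.fst.hasDerivAt

lemma hd_c2 (h : HasDerivAt f f' x) : HasDerivAt (fun y => (f y).2.1) f'.2.1 x := by
  simpa using h.hasFDerivAt.snd.fst.hasDerivAt

lemma hd_c3 (h : HasDerivAt f f' x) : HasDerivAt (fun y => (f y).2.2) f'.2.2 x := by
  simpa using h.hasFDerivAt.snd.snd.hasDerivAt

lemma hd_ip (c : ℝ) (hf : HasDerivAt f f' x) (hg : HasDerivAt g g' x) :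
    HasDerivAt (fun y => ip c (f y) (g y)) (ip c f' (g x) + ip c (f x) g') x := by
  have h := ((((hd_c1 hf).const_mul c).mul (hd_c1 hg)).add ((hd_c2 hf).mul (hd_c2 hg))).add
    ((hd_c3 hf).mul (hd_c3 hg))
  refine (h.congr_deriv (by simp only [ip]; ring)).congr_of_eventuallyEq
    (Filter.Eventually.of_forall fun y => ?_)
  simp only [ip, Pi.add_apply, Pi.mul_apply]

lemma hd_wedge (c : ℝ) (hf : HasDerivAt f f' x) (hg : HasDerivAt g g' x) :
    HasDerivAt (fun y => wedge c (f y) (g y)) (wedge c f' (g x) + wedge c (f x) g') x := by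
  have h1 := (((hd_c2 hf).mul (hd_c3 hg)).sub ((hd_c3 hf).mul (hd_c2 hg))).const_mul c
  have h2 := ((hd_c3 hf).mul (hd_c1 hg)).sub ((hd_c1 hf).mul (hd_c3 hg))
  have h3 := ((hd_c1 hf).mul (hd_c2 hg)).sub ((hd_c2 hf).mul (hd_c1 hg))
  have h := h1.prodMk (h2.prodMk h3)
  refine (h.congr_deriv ?_).congr_of_eventuallyEq (Filter.Eventually.of_forall fun y => ?_)
  · refine Prod.ext ?_ (Prod.ext ?_ ?_) <;>
      simp only [wedge, Prod.fst_add, Prod.snd_add] <;> ring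
  · refine Prod.ext ?_ (Prod.ext ?_ ?_) <;>
      simp only [wedge, Pi.sub_apply, Pi.mul_apply] <;> ring

lemma hd_cosc (c : ℝ) (hc : c = -1 ∨ c = 1) (y : ℝ) :
    HasDerivAt (cosc c) (-(c * sinc c y)) y := by
  rcases hc with h | h <;> subst h
  · rw [cosc_neg, sinc_neg]
    simpa using Real.hasDerivAt_cosh y
  · rw [cosc_one, sinc_one]
    simpa using Real.hasDerivAt_cos y

lemma hd_sinc (c : ℝ) (hc : c = -1 ∨ c = 1) (y : ℝ) :
    HasDerivAt (sinc c) (cosc c y) y := by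
  rcases hc with h | h <;> subst h
  · rw [cosc_neg, sinc_neg]; exact Real.hasDerivAt_sinh y
  · rw [cosc_one, sinc_one]; exact Real.hasDerivAt_sin y

lemma sq_sinc_cosc (c : ℝ) (hc : c = -1 ∨ c = 1) (y : ℝ) :
    c * sinc c y ^ 2 + cosc c y ^ 2 = 1 := by
  rcases hc with h | h <;> subst h
  · rw [cosc_neg, sinc_neg]
    have := Real.cosh_sq_sub_sinh_sq y; linarith
  · rw [cosc_one, sinc_one]
    have := Real.sin_sq_add_cos_sq y; linarith

lemma arctanc_diff (c : ℝ) (hc : c = -1 ∨ c = 1) (y : ℝ)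
    (hy : c = -1 → -1 < y ∧ y < 1) : DifferentiableAt ℝ (arctanc c) y := by
  rcases hc with h | h <;> subst h
  · obtain ⟨h1, h2⟩ := hy rfl
    rw [arctanc_neg, arctanh_def]
    have hd : DifferentiableAt ℝ (fun z : ℝ => (1 + z) / (1 - z)) y := by
      apply DifferentiableAt.div (by fun_prop) (by fun_prop)
      intro h; linarith
    have hpos : (0:ℝ) < (1 + y) / (1 - y) :=
      div_pos (by linarith) (by linarith)
    exact ((Real.differentiableAt_log (ne_of_gt hpos)).comp y hd).div_const 2
  · rw [arctanc_one]
    exact Real.differentiable_arctan y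

lemma sinc_arctanc (c : ℝ) (hc : c = -1 ∨ c = 1) (y : ℝ)
    (hy : c = -1 → -1 < y ∧ y < 1) :
    sinc c (arctanc c y) = y * cosc c (arctanc c y) := by
  rcases hc with h | h <;> subst h
  · obtain ⟨h1, h2⟩ := hy rfl
    rw [arctanc_neg, sinc_neg, cosc_neg]
    have hpos : (0:ℝ) < (1 + y) / (1 - y) :=
      div_pos (by linarith) (by linarith)
    set E := Real.exp (arctanh y) with hE
    have hEpos : 0 < E := Real.exp_pos _
    have hEne : E ≠ 0 := ne_of_gt hEpos
    have hE2 : E * E = (1 + y) / (1 - y) := by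
      rw [hE, ← Real.exp_add, arctanh,
        show Real.log ((1 + y) / (1 - y)) / 2 + Real.log ((1 + y) / (1 - y)) / 2 =
          Real.log ((1 + y) / (1 - y)) by ring]
      exact Real.exp_log hpos
    have h3 : E * E * (1 - y) = 1 + y := by
      rw [hE2, div_mul_cancel₀ _ (by linarith : (1:ℝ) - y ≠ 0)]
    have key : E - E⁻¹ = y * (E + E⁻¹) := by
      field_simp
      linear_combination h3
    rw [Real.sinh_eq, Real.cosh_eq, Real.exp_neg, ← hE]
    linarith [key]
  · rw [arctanc_one, sinc_one, cosc_one]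
    rw [Real.sin_arctan, Real.cos_arctan]
    ring

end Evo

theorem evolutoid_regularity
    (c : ℝ) (hc : c ∈ ({-1, 1} : Set ℝ))
    (γ : ℝ → ℝ × ℝ × ℝ) (hγ : ContDiff ℝ (⊤ : ℕ∞) γ)
    (hγM : ∀ s, ip c (γ s) (γ s) = c)
    (hunit : ∀ s, ip c (deriv γ s) (deriv γ s) = 1)
    (t : ℝ → ℝ × ℝ × ℝ) (ht : t = deriv γ)
    (e : ℝ → ℝ × ℝ × ℝ) (he : ∀ s, e s = wedge c (γ s) (t s))
    (k : ℝ → ℝ) (hk : ∀ s, k s = ip c (deriv (deriv γ) s) (e s))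
    (α : ℝ) (hα : α ∈ Set.Icc 0 (Real.pi / 2))
    (a b : ℝ) (ha : a = Real.cos α) (hb : b = Real.sin α)
    (v : ℝ → ℝ × ℝ × ℝ) (hv : ∀ s, v s = a • t s + b • e s)
    (hconv₁ : c = 1 → ∀ s, 0 < k s) (hconv₂ : c = -1 → ∀ s, 1 < k s)
    (ρ : ℝ → ℝ) (hρ : ∀ s, ρ s = arctanc c (b / k s))
    (γα : ℝ → ℝ × ℝ × ℝ)
    (hγα : ∀ s, γα s = cosc c (ρ s) • γ s + sinc c (ρ s) • v s)
    :
    ∀ s, deriv γα s ≠ 0 ↔ deriv ρ s ≠ -Real.cos α := by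
  simp only [Set.mem_insert_iff, Set.mem_singleton_iff] at hc
  have hc2 : c ^ 2 = 1 := by rcases hc with h | h <;> rw [h] <;> norm_num
  have hb0 : 0 ≤ b := by
    rw [hb]
    exact Real.sin_nonneg_of_nonneg_of_le_pi hα.1 (le_trans hα.2 (by linarith [Real.pi_pos]))
  have hab : a ^ 2 + b ^ 2 = 1 := by rw [ha, hb]; exact Real.cos_sq_add_sin_sq α
  have hkpos : ∀ u, 0 < k u := by
    rcases hc with h | h
    · exact fun u => lt_trans one_pos (hconv₂ h u)
    · exact hconv₁ h
  have hkne : ∀ u, k u ≠ 0 := fun u => ne_of_gt (hkpos u)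
  have hbk : ∀ u, c = -1 → -1 < b / k u ∧ b / k u < 1 := by
    intro u h
    have h1 := hconv₂ h u
    have hb1 : b ≤ 1 := by rw [hb]; exact Real.sin_le_one α
    constructor
    · have : 0 ≤ b / k u := div_nonneg hb0 (le_of_lt (hkpos u))
      linarith
    · rw [div_lt_one (hkpos u)]; linarith
  have hγd : Differentiable ℝ γ := hγ.differentiable (by simp)
  have hone : (1 : WithTop ℕ∞) ≤ ((⊤ : ℕ∞) : WithTop ℕ∞) := by exact_mod_cast le_top
  have htC : ContDiff ℝ ((⊤ : ℕ∞) : WithTop ℕ∞) t := by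
    rw [ht]; exact (contDiff_infty_iff_deriv.mp (hγ.of_le (by simp))).2
  have htd : Differentiable ℝ t := htC.differentiable (by simp)
  set T : ℝ → ℝ × ℝ × ℝ := deriv t with hT
  have ht2C : ContDiff ℝ ((⊤ : ℕ∞) : WithTop ℕ∞) T := (contDiff_infty_iff_deriv.mp htC).2
  have ht2d : Differentiable ℝ T := ht2C.differentiable (by simp)
  have Hγ : ∀ u, HasDerivAt γ (t u) u := by
    intro u; rw [ht]; exact (hγd u).hasDerivAt
  have Ht : ∀ u, HasDerivAt t (T u) u := fun u => (htd u).hasDerivAt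
  have HT : ∀ u, HasDerivAt T (deriv T u) u := fun u => (ht2d u).hasDerivAt
  have hefun : e = fun u => wedge c (γ u) (t u) := funext he
  have He : ∀ u, HasDerivAt e (wedge c (t u) (t u) + wedge c (γ u) (T u)) u := by
    rw [hefun]; exact fun u => Evo.hd_wedge c (Hγ u) (Ht u)
  have He' : ∀ u, HasDerivAt e (wedge c (γ u) (T u)) u := by
    intro u; have h := He u; rwa [Evo.wedge_self, zero_add] at h
  have hkfun : k = fun u => ip c (T u) (e u) := by
    funext u; rw [hk u, hT, ht]
  have htt : ∀ u, ip c (t u) (t u) = 1 := by intro u; rw [ht]; exact hunit u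
  have hγt : ∀ u, ip c (γ u) (t u) = 0 := by
    intro u
    have hconst : (fun u => ip c (γ u) (γ u)) = fun _ => c := funext hγM
    have F : HasDerivAt (fun _ : ℝ => c) (ip c (t u) (γ u) + ip c (γ u) (t u)) u := by
      rw [← hconst]; exact Evo.hd_ip c (Hγ u) (Hγ u)
    have h0 := F.unique (hasDerivAt_const u c)
    have hsym := Evo.ip_comm c (t u) (γ u)
    linarith
  have hγT : ∀ u, ip c (γ u) (T u) = -1 := by
    intro u
    have hconst : (fun u => ip c (γ u) (t u)) = fun _ => (0 : ℝ) := funext hγt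
    have F : HasDerivAt (fun _ : ℝ => (0:ℝ)) (ip c (t u) (t u) + ip c (γ u) (T u)) u := by
      rw [← hconst]; exact Evo.hd_ip c (Hγ u) (Ht u)
    have h0 := F.unique (hasDerivAt_const u 0)
    have h1 := htt u
    linarith
  have hTγ : ∀ u, ip c (T u) (γ u) = -1 := by
    intro u; rw [Evo.ip_comm]; exact hγT u
  have hTt : ∀ u, ip c (T u) (t u) = 0 := by
    intro u
    have hconst : (fun u => ip c (t u) (t u)) = fun _ => (1 : ℝ) := funext htt
    have F : HasDerivAt (fun _ : ℝ => (1:ℝ)) (ip c (T u) (t u) + ip c (t u) (T u)) u := by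
      rw [← hconst]; exact Evo.hd_ip c (Ht u) (Ht u)
    have h0 := F.unique (hasDerivAt_const u 1)
    have hsym := Evo.ip_comm c (T u) (t u)
    linarith
  intro s
  have hγe : ip c (γ s) (e s) = 0 := by
    rw [he s, Evo.ip_comm]
    exact Evo.ip_wedge_left c hc (γ s) (t s)
  have hte : ip c (t s) (e s) = 0 := by
    rw [he s, Evo.ip_comm]
    exact Evo.ip_wedge_right c hc (γ s) (t s)
  have hee : ip c (e s) (e s) = 1 := by
    rw [he s, Evo.ip_wedge_self c hc, hγM s, htt s, hγt s]
    linear_combination hc2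
  have hTe : ip c (T s) (e s) = k s := (congrFun hkfun s).symm
  have hfr : T s = (-c) • γ s + k s • e s := by
    have hm := Evo.master c hc (γ s) (t s) (T s)
    rw [← he s, hee, hTγ s, htt s, hTt s, hγt s, hγM s, hTe, one_smul] at hm
    rw [hm]
    match_scalars <;> ring
  have hγe' : wedge c (γ s) (e s) = -t s := by
    rw [he s, Evo.wedge_wedge c hc, hγt s, hγM s]
    match_scalars
    all_goals try ring1
    all_goals linear_combination -hc2
  have hvfun : v = fun u => a • t u + b • e u := funext hv
  have Hv : HasDerivAt v (a • T s + b • wedge c (γ s) (T s)) s := by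
    rw [hvfun]
    exact ((Ht s).const_smul a).add ((He' s).const_smul b)
  have Hk : HasDerivAt k (ip c (deriv T s) (e s) + ip c (T s) (wedge c (γ s) (T s))) s := by
    rw [hkfun]; exact Evo.hd_ip c (HT s) (He' s)
  have hρfun : ρ = fun u => arctanc c (b / k u) := funext hρ
  have hρd : DifferentiableAt ℝ ρ s := by
    rw [hρfun]
    exact (Evo.arctanc_diff c hc _ (hbk s)).comp s
      ((differentiableAt_const b).div Hk.differentiableAt (hkne s))
  set r := deriv ρ s with hr
  have Hρ : HasDerivAt ρ r s := hρd.hasDerivAt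
  have htrig : k s * sinc c (ρ s) = b * cosc c (ρ s) := by
    rw [hρ s, Evo.sinc_arctanc c hc (b / k s) (hbk s)]
    field_simp
    rw [mul_assoc]; exact mul_div_cancel_left₀ _ (hkne s)
  have hsq := Evo.sq_sinc_cosc c hc (ρ s)
  have hγαfun : γα = fun u => cosc c (ρ u) • γ u + sinc c (ρ u) • v u := funext hγα
  have Hcos : HasDerivAt (fun u => cosc c (ρ u)) (-(c * sinc c (ρ s)) * r) s :=
    (Evo.hd_cosc c hc (ρ s)).comp s Hρ
  have Hsin : HasDerivAt (fun u => sinc c (ρ u)) (cosc c (ρ s) * r) s :=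
    (Evo.hd_sinc c hc (ρ s)).comp s Hρ
  have Hγα : HasDerivAt γα (cosc c (ρ s) • t s + (-(c * sinc c (ρ s)) * r) • γ s +
      (sinc c (ρ s) • (a • T s + b • wedge c (γ s) (T s)) + (cosc c (ρ s) * r) • v s)) s := by
    rw [hγαfun]
    exact (Hcos.smul (Hγ s)).add (Hsin.smul Hv)
  have hD := Hγα.deriv
  set S := sinc c (ρ s) with hS
  set C := cosc c (ρ s) with hC
  have hDw : deriv γα s = (r + a) •
      ((-(c * S)) • γ s + (a * C) • t s + (b * C) • e s) := by
    rw [hD, hv s, hfr, Evo.wedge_comb, Evo.wedge_self, smul_zero, zero_add, hγe']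
    match_scalars
    all_goals try ring1
    · linear_combination (-b) * htrig - C * hab
    · linear_combination a * htrig
  have hww : ip c ((-(c * S)) • γ s + (a * C) • t s + (b * C) • e s)
      ((-(c * S)) • γ s + (a * C) • t s + (b * C) • e s) = 1 := by
    rw [Evo.ip_comb, hγM s, htt s, hee, hγt s, hγe, hte]
    linear_combination (c * S ^ 2) * hc2 + C ^ 2 * hab + hsq
  have hwne : ((-(c * S)) • γ s + (a * C) • t s + (b * C) • e s) ≠ 0 := by
    intro h0
    rw [h0] at hww
    simp [ip] at hww
  rw [hDw, smul_ne_zero_iff, ← ha]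
  constructor
  · rintro ⟨h1, -⟩ h2
    exact h1 (by rw [h2]; ring)
  · intro h
    exact ⟨fun h0 => h (by linarith), hwne⟩
end
end

section
/- Define the planar α-evolutoid γ_α(s) = γ(s) + ρ_α(s)·v_α(s), where ρ_α(s) = sin(α)/k(s). Then γ_α'(s) = (ρ_α'(s) + cos α)·v_α(s) for all s, and consequently γ_α'(s) ≠ 0 if and only if ρ_α'(s) ≠ −cos α. -/
noncomputable section

open Real

/-- The Euclidean inner product on `ℝ²`. -/
def ip2 (x y : ℝ × ℝ) : ℝ := x.1 * y.1 + x.2 * y.2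

/-- The determinant of the pair of vectors `(x, y)` in `ℝ²`. -/
def det2 (x y : ℝ × ℝ) : ℝ := x.1 * y.2 - x.2 * y.1

/-- Rotation by `+π/2` in `ℝ²`. -/
def rot (x : ℝ × ℝ) : ℝ × ℝ := (-x.2, x.1)

theorem plane_evolutoid_derivative_and_regularity
    (γ : ℝ → ℝ × ℝ) (hγ : ContDiff ℝ (⊤ : ℕ∞) γ)
    (hunit : ∀ s, ip2 (deriv γ s) (deriv γ s) = 1)
    (t : ℝ → ℝ × ℝ) (ht : t = deriv γ)
    (e : ℝ → ℝ × ℝ) (he : ∀ s, e s = rot (t s))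
    (k : ℝ → ℝ) (hk : ∀ s, k s = ip2 (deriv (deriv γ) s) (e s))
    (hconv : ∀ s, 0 < k s)
    (α : ℝ) (hα : α ∈ Set.Icc 0 (Real.pi / 2))
    (a b : ℝ) (ha : a = Real.cos α) (hb : b = Real.sin α)
    (v : ℝ → ℝ × ℝ) (hv : ∀ s, v s = a • t s + b • e s)
    (ρ : ℝ → ℝ) (hρ : ∀ s, ρ s = Real.sin α / k s)
    (γα : ℝ → ℝ × ℝ) (hγα : ∀ s, γα s = γ s + ρ s • v s) :
    ∀ s, deriv γα s = (deriv ρ s + Real.cos α) • v s ∧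
      (deriv γα s ≠ 0 ↔ deriv ρ s ≠ -Real.cos α) := by
  have he' : e = fun s => rot (t s) := funext he
  have hk' : k = fun s => ip2 (deriv (deriv γ) s) (e s) := funext hk
  have hv' : v = fun s => a • t s + b • e s := funext hv
  have hρ' : ρ = fun s => Real.sin α / k s := funext hρ
  have hγα' : γα = fun s => γ s + ρ s • v s := funext hγα
  subst hγα' hρ' hv' hk' he' ht
  have hab : a ^ 2 + b ^ 2 = 1 := by rw [ha, hb]; exact cos_sq_add_sin_sq α
  -- smoothness
  have hle : (1:WithTop ℕ∞) ≤ (((⊤:ℕ∞)) : WithTop ℕ∞) := by exact_mod_cast le_top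
  have hγ' : ContDiff ℝ ((⊤ : ℕ∞) : WithTop ℕ∞) γ := hγ.of_le (by simp)
  have hct : ContDiff ℝ ((⊤ : ℕ∞) : WithTop ℕ∞) (deriv γ) := (contDiff_infty_iff_deriv.mp hγ').2
  have hcT : ContDiff ℝ ((⊤ : ℕ∞) : WithTop ℕ∞) (deriv (deriv γ)) := (contDiff_infty_iff_deriv.mp hct).2
  intro s
  set t := deriv γ with ht
  set T := deriv t with hT
  have hdt : HasDerivAt γ (t s) s := ((hγ'.differentiable (zero_lt_one.trans_le hle).ne') s).hasDerivAt
  have hdT : HasDerivAt t (T s) s := ((hct.differentiable (zero_lt_one.trans_le hle).ne') s).hasDerivAt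
  -- component derivatives of t
  have ht1 : HasDerivAt (fun u => (t u).1) ((T s).1) s :=
    (ContinuousLinearMap.fst ℝ ℝ ℝ).hasFDerivAt.comp_hasDerivAt s hdT
  have ht2 : HasDerivAt (fun u => (t u).2) ((T s).2) s :=
    (ContinuousLinearMap.snd ℝ ℝ ℝ).hasFDerivAt.comp_hasDerivAt s hdT
  -- unit speed and orthogonality
  have hu : (t s).1 ^ 2 + (t s).2 ^ 2 = 1 := by
    have := hunit s; simp only [ip2, ← ht] at this; nlinarith [this]
  have horth : (T s).1 * (t s).1 + (T s).2 * (t s).2 = 0 := by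
    have hsq : HasDerivAt (fun u => (t u).1 * (t u).1 + (t u).2 * (t u).2)
        ((T s).1 * (t s).1 + (t s).1 * (T s).1 + ((T s).2 * (t s).2 + (t s).2 * (T s).2)) s :=
      (ht1.mul ht1).add (ht2.mul ht2)
    have hconst : (fun u => (t u).1 * (t u).1 + (t u).2 * (t u).2) = fun _ => (1:ℝ) := by
      funext u; have := hunit u; simpa [ip2, ← ht] using this
    rw [hconst] at hsq
    have : ((T s).1 * (t s).1 + (t s).1 * (T s).1 + ((T s).2 * (t s).2 + (t s).2 * (T s).2)) = 0 := by
      have := hsq.deriv; simpa using this.symm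
    linarith
  -- Frenet: T s = k s • e s
  set ks : ℝ := ip2 (T s) (rot (t s)) with hks
  have hksd : ks = -(T s).1 * (t s).2 + (T s).2 * (t s).1 := by simp only [hks, ip2, rot]; ring
  have hT1 : (T s).1 = ks * (-(t s).2) := by linear_combination (t s).2 * hksd + (-(T s).1) * hu + (t s).1 * horth
  have hT2 : (T s).2 = ks * (t s).1 := by linear_combination (-(t s).1) * hksd + (-(T s).2) * hu + (t s).2 * horth
  have hkpos : 0 < ks := by have := hconv s; simpa [← hT] using this
  -- derivative of k
  have hkfun : (fun u => ip2 (deriv t u) (rot (t u)))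
      = fun u => (deriv t u).1 * (-(t u).2) + (deriv t u).2 * (t u).1 := by
    funext u; simp [ip2, rot]
  have hkdiff : DifferentiableAt ℝ (fun u => ip2 (deriv t u) (rot (t u))) s := by
    rw [hkfun]
    have hTd : DifferentiableAt ℝ T s := (hcT.differentiable (zero_lt_one.trans_le hle).ne') s
    have hT1d : DifferentiableAt ℝ (fun u => (T u).1) s :=
      ((ContinuousLinearMap.fst ℝ ℝ ℝ).hasFDerivAt.comp_hasDerivAt s hTd.hasDerivAt).differentiableAt
    have hT2d : DifferentiableAt ℝ (fun u => (T u).2) s :=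
      ((ContinuousLinearMap.snd ℝ ℝ ℝ).hasFDerivAt.comp_hasDerivAt s hTd.hasDerivAt).differentiableAt
    exact (hT1d.mul ht2.differentiableAt.neg).add (hT2d.mul ht1.differentiableAt)
  have hρdiff : DifferentiableAt ℝ (fun u => Real.sin α / ip2 (deriv t u) (rot (t u))) s := by
    apply DifferentiableAt.div (differentiableAt_const _) hkdiff
    exact ne_of_gt hkpos
  have hρd : HasDerivAt (fun u => Real.sin α / ip2 (deriv t u) (rot (t u)))
      (deriv (fun u => Real.sin α / ip2 (deriv t u) (rot (t u))) s) s := hρdiff.hasDerivAt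
  have hkne : ks ≠ 0 := ne_of_gt hkpos
  have hde : HasDerivAt (fun u => rot (t u)) (rot (T s)) s := by
    have h : HasDerivAt (fun u => ((-(t u).2 : ℝ), (t u).1)) (-(T s).2, (T s).1) s :=
      HasDerivAt.prodMk ht2.neg ht1
    have hfe : (fun u => rot (t u)) = fun u => ((-(t u).2 : ℝ), (t u).1) := by
      funext u; simp [rot]
    rw [hfe]; exact h
  have hdv : HasDerivAt (fun u => a • t u + b • rot (t u)) (a • T s + b • rot (T s)) s :=
    (hdT.const_smul a).add (hde.const_smul b)
  set ρf : ℝ → ℝ := fun u => Real.sin α / ip2 (deriv t u) (rot (t u)) with hρf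
  set vf : ℝ → ℝ × ℝ := fun u => a • t u + b • rot (t u) with hvf
  set dρ := deriv ρf s with hdρ
  have hdγα : HasDerivAt (fun u => γ u + ρf u • vf u)
      (t s + (ρf s • (a • T s + b • rot (T s)) + dρ • vf s)) s := hdt.add (hρd.smul hdv)
  have hρs : ρf s = b / ks := by simp only [hρf, hks, hb]; rfl
  have hρk : ρf s * ks = b := by rw [hρs]; field_simp
  have hmain : deriv (fun u => γ u + ρf u • vf u) s = (dρ + a) • vf s := by
    rw [hdγα.deriv, Prod.ext_iff]
    constructor
    · simp only [hvf, rot, Prod.fst_add, Prod.smul_fst, Prod.smul_snd, Prod.fst_neg, hT1, hT2,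
        Prod.mk.injEq, smul_eq_mul, Prod.fst, Prod.snd]
      ring_nf
      linear_combination (-(a*(t s).2 + b*(t s).1)) * hρk + (-(t s).1) * hab
    · simp only [hvf, rot, Prod.snd_add, Prod.smul_fst, Prod.smul_snd, hT1, hT2,
        smul_eq_mul]
      ring_nf
      linear_combination ((a*(t s).1 - b*(t s).2)) * hρk + (-(t s).2) * hab
  have hvne : vf s ≠ 0 := by
    intro h0
    have h1 : a * (t s).1 - b * (t s).2 = 0 := by
      have := congrArg Prod.fst h0
      simpa [hvf, rot, smul_eq_mul, sub_eq_add_neg] using this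
    have h2 : a * (t s).2 + b * (t s).1 = 0 := by
      have := congrArg Prod.snd h0
      simpa [hvf, rot, smul_eq_mul] using this
    nlinarith [hu, hab, h1, h2, sq_nonneg (a * (t s).1 - b * (t s).2)]
  constructor
  · show deriv (fun u => γ u + ρf u • vf u) s = (dρ + Real.cos α) • vf s
    rw [hmain, ha]
  · show deriv (fun u => γ u + ρf u • vf u) s ≠ 0 ↔ dρ ≠ -Real.cos α
    rw [hmain, smul_ne_zero_iff]
    constructor
    · rintro ⟨h1, _⟩ h2
      exact h1 (by rw [h2, ha]; ring)
    · intro h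
      refine ⟨fun hc => h ?_, hvne⟩
      rw [← ha]; linarith
end
end

section
/- The function k_α(s) = (k(s)² + c·b²)^{3/2} / (a·(k(s)² + c·b²) − b·k'(s)) (the geodesic curvature of the α-evolutoid) is constant if and only if k is constant; i.e., a smooth closed convex curve in M_c is a geodesic circle if and only if its α-evolutoid is a geodesic circle. -/
noncomputable section

open Real

theorem evolutoid_circle_iff_circle
    (c : ℝ) (hc : c ∈ ({-1, 0, 1} : Set ℝ))
    (α : ℝ) (hα : α ∈ Set.Ico 0 (Real.pi / 2))
    (a b : ℝ) (ha : a = Real.cos α) (hb : b = Real.sin α)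
    (ℓ : ℝ) (hℓ : 0 < ℓ)
    (k : ℝ → ℝ) (hk : ContDiff ℝ (⊤ : ℕ∞) k) (hper : ∀ s, k (s + ℓ) = k s)
    (hconv₁ : c = -1 → ∀ s, 1 < k s) (hconv₂ : c ≠ -1 → ∀ s, 0 < k s)
    (hreg : ∀ s, 0 < a * (k s ^ 2 + c * b ^ 2) - b * deriv k s)
    (kα : ℝ → ℝ)
    (hkα : ∀ s, kα s = (k s ^ 2 + c * b ^ 2) ^ ((3 : ℝ) / 2) /
      (a * (k s ^ 2 + c * b ^ 2) - b * deriv k s)) :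
    (∃ k₀, ∀ s, k s = k₀) ↔ (∃ K, ∀ s, kα s = K) := by
  obtain ⟨hα0, hαlt⟩ := hα
  have hπ : 0 < Real.pi := Real.pi_pos
  have ha0 : 0 < a := by
    rw [ha]; exact Real.cos_pos_of_mem_Ioo ⟨by linarith, hαlt⟩
  have hb2 : b ^ 2 < 1 := by
    have := Real.sin_sq_add_cos_sq α
    rw [ha] at ha0; rw [hb]; nlinarith
  have hkpos : ∀ s, 0 < k s := by
    intro s
    rcases eq_or_ne c (-1) with h | h
    · linarith [hconv₁ h s]
    · exact hconv₂ h s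
  have hφpos : ∀ s, 0 < k s ^ 2 + c * b ^ 2 := by
    intro s
    rcases hc with h | h | h
    · have h1 := hconv₁ h s
      rw [h]; nlinarith
    · rw [h]; simpa using pow_pos (hkpos s) 2
    · rw [h]; nlinarith [hkpos s, sq_nonneg b]
  have hdiff : Differentiable ℝ k := hk.differentiable (by simp)
  constructor
  · rintro ⟨k₀, hk0⟩
    have hkc : k = fun _ => k₀ := funext hk0
    have hd0 : ∀ s, deriv k s = 0 := by intro s; rw [hkc]; simp
    refine ⟨(k₀ ^ 2 + c * b ^ 2) ^ ((3 : ℝ) / 2) / (a * (k₀ ^ 2 + c * b ^ 2)), fun s => ?_⟩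
    rw [hkα s, hd0 s, hk0 s]; ring_nf
  · rintro ⟨K, hK⟩
    have hper' : Function.Periodic k ℓ := hper
    obtain ⟨s₀, _, hmax⟩ := (isCompact_Icc (a := (0:ℝ)) (b := ℓ)).exists_isMaxOn
      (Set.nonempty_Icc.mpr hℓ.le) hdiff.continuous.continuousOn
    obtain ⟨s₁, _, hmin⟩ := (isCompact_Icc (a := (0:ℝ)) (b := ℓ)).exists_isMinOn
      (Set.nonempty_Icc.mpr hℓ.le) hdiff.continuous.continuousOn
    have hmax' : ∀ s, k s ≤ k s₀ := by
      intro s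
      obtain ⟨t, ht, hts⟩ := hper'.exists_mem_Ico₀ hℓ s
      rw [hts]; exact hmax (Set.Ico_subset_Icc_self ht)
    have hmin' : ∀ s, k s₁ ≤ k s := by
      intro s
      obtain ⟨t, ht, hts⟩ := hper'.exists_mem_Ico₀ hℓ s
      rw [hts]; exact hmin (Set.Ico_subset_Icc_self ht)
    have hlm : IsLocalMax k s₀ := Filter.Eventually.of_forall hmax'
    have hln : IsLocalMin k s₁ := Filter.Eventually.of_forall hmin'
    have hd₀ : deriv k s₀ = 0 := hlm.deriv_eq_zero
    have hd₁ : deriv k s₁ = 0 := hln.deriv_eq_zero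
    -- at a critical point s with kα s = K, φ s = (K*a)^2
    have key : ∀ s, deriv k s = 0 → k s ^ 2 + c * b ^ 2 = (K * a) ^ 2 := by
      intro s hd
      set φ := k s ^ 2 + c * b ^ 2 with hφdef
      have hφ : 0 < φ := hφpos s
      have hden : 0 < a * φ - b * deriv k s := hreg s
      have hEq : K * (a * φ - b * deriv k s) = φ ^ ((3 : ℝ) / 2) := by
        have h1 := (hK s).symm
        rw [hkα s] at h1
        field_simp [ne_of_gt hden] at h1
        have hD' : (k s ^ 2 + c * b ^ 2) * a - b * deriv k s = a * φ - b * deriv k s := by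
          rw [hφdef]; ring
        rw [h1, div_mul_eq_mul_div, div_eq_iff (by rw [hD']; exact ne_of_gt hden), hD', hφdef]
      rw [hd] at hEq
      have h32 : φ ^ ((3 : ℝ) / 2) = φ * Real.sqrt φ := by
        rw [Real.sqrt_eq_rpow]
        rw [← Real.rpow_one_add' (by positivity) (by norm_num)]
        norm_num
      have hKa : K * a = Real.sqrt φ := by
        rw [h32] at hEq
        have h2 : (K * a) * φ = Real.sqrt φ * φ := by linarith
        exact mul_right_cancel₀ (ne_of_gt hφ) h2
      have := Real.sq_sqrt hφ.le
      rw [← hKa] at this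
      linarith [this]
    have h₀ := key s₀ hd₀
    have h₁ := key s₁ hd₁
    have heq : k s₀ = k s₁ := by nlinarith [hkpos s₀, hkpos s₁]
    exact ⟨k s₁, fun s => le_antisymm (heq ▸ hmax' s) (hmin' s)⟩
end
end

section
/- Let λ : ℝ → ℝ be differentiable and define η(s) = cos_c(λ(s))·γ(s) + sin_c(λ(s))·t(s) (a curve supported on the tangent geodesics of γ). Then η'(s) = −c·sin_c(λ(s))·(λ'(s)+1)·γ(s) + cos_c(λ(s))·(λ'(s)+1)·t(s) + k(s)·sin_c(λ(s))·e(s). Consequently, if k(s) ≠ 0 and η'(s) = 0, then sin_c(λ(s)) = 0 and η(s) = cos_c(λ(s))·γ(s); in particular, for c = −1 every singular point of η lies on γ, i.e. η(s) = γ(s). -/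
noncomputable section

open Real

private lemma hasDerivAt_fst3 {f : ℝ → ℝ × ℝ × ℝ} {v : ℝ × ℝ × ℝ} {x : ℝ}
    (h : HasDerivAt f v x) : HasDerivAt (fun y => (f y).1) v.1 x := by
  simpa using h.hasFDerivAt.fst.hasDerivAt

private lemma hasDerivAt_snd3 {f : ℝ → ℝ × ℝ × ℝ} {v : ℝ × ℝ × ℝ} {x : ℝ}
    (h : HasDerivAt f v x) : HasDerivAt (fun y => (f y).2.1) v.2.1 x := by
  simpa using h.hasFDerivAt.snd.fst.hasDerivAt

private lemma hasDerivAt_trd3 {f : ℝ → ℝ × ℝ × ℝ} {v : ℝ × ℝ × ℝ} {x : ℝ}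
    (h : HasDerivAt f v x) : HasDerivAt (fun y => (f y).2.2) v.2.2 x := by
  simpa using h.hasFDerivAt.snd.snd.hasDerivAt

private lemma frame_decomp_s12 (c u1 u2 u3 v1 v2 v3 p1 p2 p3 k : ℝ) (hc2 : c*c = 1)
    (huu : c*u1*u1 + u2*u2 + u3*u3 = c)
    (hvv : c*v1*v1 + v2*v2 + v3*v3 = 1)
    (huv : c*u1*v1 + u2*v2 + u3*v3 = 0)
    (hpu : c*p1*u1 + p2*u2 + p3*u3 = -1)
    (hpv : c*p1*v1 + p2*v2 + p3*v3 = 0)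
    (hpw : c*p1*(c*(u2*v3 - u3*v2)) + p2*(u3*v1 - u1*v3) + p3*(u1*v2 - u2*v1) = k) :
    p1 = -(c*u1) + k*(c*(u2*v3 - u3*v2)) ∧
    p2 = -(c*u2) + k*(u3*v1 - u1*v3) ∧
    p3 = -(c*u3) + k*(u1*v2 - u2*v1) := by
  obtain ⟨w1, hw1⟩ : ∃ x:ℝ, x = c*(u2*v3 - u3*v2) := ⟨_, rfl⟩
  obtain ⟨w2, hw2⟩ : ∃ x:ℝ, x = u3*v1 - u1*v3 := ⟨_, rfl⟩
  obtain ⟨w3, hw3⟩ : ∃ x:ℝ, x = u1*v2 - u2*v1 := ⟨_, rfl⟩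
  obtain ⟨q1, hq1⟩ : ∃ x:ℝ, x = p1 + c*u1 - k*w1 := ⟨_, rfl⟩
  obtain ⟨q2, hq2⟩ : ∃ x:ℝ, x = p2 + c*u2 - k*w2 := ⟨_, rfl⟩
  obtain ⟨q3, hq3⟩ : ∃ x:ℝ, x = p3 + c*u3 - k*w3 := ⟨_, rfl⟩
  have hpw' : c*p1*w1 + p2*w2 + p3*w3 = k := by rw [hw1, hw2, hw3]; exact hpw
  have hqu : c*q1*u1 + q2*u2 + q3*u3 = 0 := by
    linear_combination c*u1*hq1 + u2*hq2 + u3*hq3 - k*c*u1*hw1 - k*u2*hw2 - k*u3*hw3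
      + hpu + c*huu + (1 + u1*u3*v2*k - u1*u2*v3*k)*hc2
  have hqv : c*q1*v1 + q2*v2 + q3*v3 = 0 := by
    linear_combination c*v1*hq1 + v2*hq2 + v3*hq3 - k*c*v1*hw1 - k*v2*hw2 - k*v3*hw3
      + hpv + c*huv + (u3*v1*v2*k - u2*v1*v3*k)*hc2
  have hww : c*w1*w1 + w2*w2 + w3*w3 = 1 := by
    linear_combination (c*(w1 + c*(u2*v3-u3*v2)))*hw1 + (w2 + (u3*v1-u1*v3))*hw2
      + (w3 + (u1*v2-u2*v1))*hw3 + (c*(c*v1*v1+v2*v2+v3*v3))*huu + hvv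
      - (c*(c*u1*v1+u2*v2+u3*v3))*huv
      + (v3*v3 + v2*v2 - u3*u3*v1*v1 - u2*u2*v1*v1 + 2*u1*u3*v1*v3 + 2*u1*u2*v1*v2
         - u1*u1*v3*v3 - u1*u1*v2*v2 + c*v1*v1 + c*u3*u3*v2*v2 - 2*c*u2*u3*v2*v3
         + c*u2*u2*v3*v3)*hc2
  have hqw : c*q1*w1 + q2*w2 + q3*w3 = 0 := by
    linear_combination c*w1*hq1 + w2*hq2 + w3*hq3 + c*c*u1*hw1 + c*u2*hw2 + c*u3*hw3
      + hpw' - k*hww + (c*u1*u2*v3 - c*u1*u3*v2)*hc2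
  have h1 : q2*w3 - q3*w2 = 0 := by
    linear_combination u1*hqv - v1*hqu + q2*hw3 - q3*hw2
  have h2 : q3*w1 - q1*w3 = 0 := by
    linear_combination c*u2*hqv - c*v2*hqu + q3*hw1 - q1*hw3 + (u1*v2*q1 - u2*v1*q1)*hc2
  have h3 : q1*w2 - q2*w1 = 0 := by
    linear_combination c*u3*hqv - c*v3*hqu + q1*hw2 - q2*hw1 + (u1*v3*q1 - u3*v1*q1)*hc2
  refine ⟨?_, ?_, ?_⟩
  · linear_combination (-q1)*hww + w2*h3 - w3*h2 + w1*hqw - hq1 + k*hw1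
  · linear_combination (-q2)*hww - c*w1*h3 + w3*h1 + w2*hqw - hq2 + k*hw2
  · linear_combination (-q3)*hww + c*w1*h2 - w2*h1 + w3*hqw - hq3 + k*hw3

private lemma coeff_e_zero (c u1 u2 u3 v1 v2 v3 e1 e2 e3 a b d : ℝ) (hc2 : c*c = 1)
    (huu : c*u1*u1 + u2*u2 + u3*u3 = c)
    (hvv : c*v1*v1 + v2*v2 + v3*v3 = 1)
    (huv : c*u1*v1 + u2*v2 + u3*v3 = 0)
    (he1 : e1 = c*(u2*v3 - u3*v2)) (he2 : e2 = u3*v1 - u1*v3) (he3 : e3 = u1*v2 - u2*v1)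
    (hE1 : a*u1 + b*v1 + d*e1 = 0) (hE2 : a*u2 + b*v2 + d*e2 = 0)
    (hE3 : a*u3 + b*v3 + d*e3 = 0) : d = 0 := by
  have hee : c*e1*e1 + e2*e2 + e3*e3 = 1 := by
    linear_combination (c*(e1 + c*(u2*v3-u3*v2)))*he1 + (e2 + (u3*v1-u1*v3))*he2
      + (e3 + (u1*v2-u2*v1))*he3 + (c*(c*v1*v1+v2*v2+v3*v3))*huu + hvv
      - (c*(c*u1*v1+u2*v2+u3*v3))*huv
      + (v3*v3 + v2*v2 - u3*u3*v1*v1 - u2*u2*v1*v1 + 2*u1*u3*v1*v3 + 2*u1*u2*v1*v2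
         - u1*u1*v3*v3 - u1*u1*v2*v2 + c*v1*v1 + c*u3*u3*v2*v2 - 2*c*u2*u3*v2*v3
         + c*u2*u2*v3*v3)*hc2
  linear_combination (-d)*hee + c*e1*hE1 + e2*hE2 + e3*hE3
    - (a*c*u1 + b*c*v1)*he1 - (a*u2 + b*v2)*he2 - (a*u3 + b*v3)*he3
    + (u3*v1*v2*b - u2*v1*v3*b + u1*u3*v2*a - u1*u2*v3*a)*hc2

theorem involutoid_singular_points_lie_on_curve
    (c : ℝ) (hc : c ∈ ({-1, 1} : Set ℝ))
    (γ : ℝ → ℝ × ℝ × ℝ) (hγ : ContDiff ℝ (⊤ : ℕ∞) γ)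
    (hγM : ∀ s, ip c (γ s) (γ s) = c)
    (hunit : ∀ s, ip c (deriv γ s) (deriv γ s) = 1)
    (t : ℝ → ℝ × ℝ × ℝ) (ht : t = deriv γ)
    (e : ℝ → ℝ × ℝ × ℝ) (he : ∀ s, e s = wedge c (γ s) (t s))
    (k : ℝ → ℝ) (hk : ∀ s, k s = ip c (deriv (deriv γ) s) (e s))
    (l : ℝ → ℝ) (hl : Differentiable ℝ l)
    (η : ℝ → ℝ × ℝ × ℝ)
    (hη : ∀ s, η s = cosc c (l s) • γ s + sinc c (l s) • t s) :
    ∀ s, deriv η s =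
        (-(c * sinc c (l s)) * (deriv l s + 1)) • γ s +
        (cosc c (l s) * (deriv l s + 1)) • t s +
        (k s * sinc c (l s)) • e s ∧
      (k s ≠ 0 → deriv η s = 0 →
        sinc c (l s) = 0 ∧ η s = cosc c (l s) • γ s ∧
        (c = -1 → η s = γ s)) := by
  have hcc : c = -1 ∨ c = 1 := by
    simpa [Set.mem_insert_iff, Set.mem_singleton_iff] using hc
  have hc2 : c * c = 1 := by rcases hcc with rfl | rfl <;> norm_num
  have hγd : Differentiable ℝ γ := hγ.differentiable (by simp)
  have htd : Differentiable ℝ t := by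
    rw [ht]
    exact ((contDiff_infty_iff_deriv.mp (hγ.of_le (by simp))).2).differentiable
      (by simp)
  rw [← ht] at hunit hk
  have hγ' : ∀ r, HasDerivAt γ (t r) r := fun r => by
    rw [ht]; exact (hγd r).hasDerivAt
  have ht' : ∀ r, HasDerivAt t (deriv t r) r := fun r => (htd r).hasDerivAt
  have hG1 : ∀ r, HasDerivAt (fun y => (γ y).1) (t r).1 r := fun r => hasDerivAt_fst3 (hγ' r)
  have hG2 : ∀ r, HasDerivAt (fun y => (γ y).2.1) (t r).2.1 r := fun r => hasDerivAt_snd3 (hγ' r)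
  have hG3 : ∀ r, HasDerivAt (fun y => (γ y).2.2) (t r).2.2 r := fun r => hasDerivAt_trd3 (hγ' r)
  have hT1 : ∀ r, HasDerivAt (fun y => (t y).1) (deriv t r).1 r := fun r => hasDerivAt_fst3 (ht' r)
  have hT2 : ∀ r, HasDerivAt (fun y => (t y).2.1) (deriv t r).2.1 r := fun r => hasDerivAt_snd3 (ht' r)
  have hT3 : ∀ r, HasDerivAt (fun y => (t y).2.2) (deriv t r).2.2 r := fun r => hasDerivAt_trd3 (ht' r)
  -- ⟨γ, t⟩ = 0
  have key1 : ∀ r, c*(γ r).1*(t r).1 + (γ r).2.1*(t r).2.1 + (γ r).2.2*(t r).2.2 = 0 := by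
    intro r
    have hA := ((((hG1 r).const_mul c).mul (hG1 r)).add ((hG2 r).mul (hG2 r))).add
      ((hG3 r).mul (hG3 r))
    have hconst : HasDerivAt
        (fun y => c * (γ y).1 * (γ y).1 + (γ y).2.1 * (γ y).2.1 + (γ y).2.2 * (γ y).2.2)
        0 r := by
      have hB : (fun y => c * (γ y).1 * (γ y).1 + (γ y).2.1 * (γ y).2.1 + (γ y).2.2 * (γ y).2.2)
          = (fun _ : ℝ => c) := funext fun y => hγM y
      rw [hB]; exact hasDerivAt_const r c
    have hz := hA.unique hconst
    linear_combination hz / 2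
  intro s
  -- ⟨t', t⟩ = 0
  have hpv : c*(deriv t s).1*(t s).1 + (deriv t s).2.1*(t s).2.1 + (deriv t s).2.2*(t s).2.2 = 0 := by
    have hA := ((((hT1 s).const_mul c).mul (hT1 s)).add ((hT2 s).mul (hT2 s))).add
      ((hT3 s).mul (hT3 s))
    have hconst : HasDerivAt
        (fun y => c * (t y).1 * (t y).1 + (t y).2.1 * (t y).2.1 + (t y).2.2 * (t y).2.2)
        0 s := by
      have hB : (fun y => c * (t y).1 * (t y).1 + (t y).2.1 * (t y).2.1 + (t y).2.2 * (t y).2.2)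
          = (fun _ : ℝ => 1) := funext fun y => hunit y
      rw [hB]; exact hasDerivAt_const s 1
    have hz := hA.unique hconst
    linear_combination hz / 2
  have hvv' : c*(t s).1*(t s).1 + (t s).2.1*(t s).2.1 + (t s).2.2*(t s).2.2 = 1 := hunit s
  have huu' : c*(γ s).1*(γ s).1 + (γ s).2.1*(γ s).2.1 + (γ s).2.2*(γ s).2.2 = c := hγM s
  -- ⟨t', γ⟩ = -1
  have hpu : c*(deriv t s).1*(γ s).1 + (deriv t s).2.1*(γ s).2.1 + (deriv t s).2.2*(γ s).2.2 = -1 := by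
    have hA := ((((hG1 s).const_mul c).mul (hT1 s)).add ((hG2 s).mul (hT2 s))).add
      ((hG3 s).mul (hT3 s))
    have hconst : HasDerivAt
        (fun y => c * (γ y).1 * (t y).1 + (γ y).2.1 * (t y).2.1 + (γ y).2.2 * (t y).2.2)
        0 s := by
      have hB : (fun y => c * (γ y).1 * (t y).1 + (γ y).2.1 * (t y).2.1 + (γ y).2.2 * (t y).2.2)
          = (fun _ : ℝ => 0) := funext fun y => key1 y
      rw [hB]; exact hasDerivAt_const s 0
    have hz := hA.unique hconst
    linear_combination hz - hvv'
  have hpw : c*(deriv t s).1*(c*((γ s).2.1*(t s).2.2 - (γ s).2.2*(t s).2.1))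
      + (deriv t s).2.1*((γ s).2.2*(t s).1 - (γ s).1*(t s).2.2)
      + (deriv t s).2.2*((γ s).1*(t s).2.1 - (γ s).2.1*(t s).1) = k s := by
    have h := hk s
    rw [he s] at h
    exact h.symm
  obtain ⟨hP1, hP2, hP3⟩ := frame_decomp_s12 c (γ s).1 (γ s).2.1 (γ s).2.2 (t s).1 (t s).2.1
    (t s).2.2 (deriv t s).1 (deriv t s).2.1 (deriv t s).2.2 (k s) hc2 huu' hvv' (key1 s)
    hpu hpv hpw
  -- e components
  have he1 : (e s).1 = c*((γ s).2.1*(t s).2.2 - (γ s).2.2*(t s).2.1) := by rw [he s]; rfl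
  have he2 : (e s).2.1 = (γ s).2.2*(t s).1 - (γ s).1*(t s).2.2 := by rw [he s]; rfl
  have he3 : (e s).2.2 = (γ s).1*(t s).2.1 - (γ s).2.1*(t s).1 := by rw [he s]; rfl
  -- derivative of cosc/sinc composed with l
  have hlds : HasDerivAt l (deriv l s) s := (hl s).hasDerivAt
  have hcos : HasDerivAt (fun r => cosc c (l r)) (-(c * sinc c (l s)) * deriv l s) s := by
    rcases hcc with rfl | rfl
    · have hfun : (fun r => cosc (-1) (l r)) = fun r => Real.cosh (l r) := by
        funext r; simp [cosc]
      rw [hfun]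
      convert hlds.cosh using 1
      rw [show _root_.sinc (-1) (l s) = Real.sinh (l s) from by simp [_root_.sinc]]; ring
    · have hfun : (fun r => cosc 1 (l r)) = fun r => Real.cos (l r) := by
        funext r; norm_num [cosc]
      rw [hfun]
      convert hlds.cos using 1
      rw [show _root_.sinc 1 (l s) = Real.sin (l s) from by norm_num [_root_.sinc]]; ring
  have hsin : HasDerivAt (fun r => sinc c (l r)) (cosc c (l s) * deriv l s) s := by
    rcases hcc with rfl | rfl
    · have hfun : (fun r => sinc (-1) (l r)) = fun r => Real.sinh (l r) := by
        funext r; simp [_root_.sinc]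
      rw [hfun]
      convert hlds.sinh using 1
      rw [show cosc (-1) (l s) = Real.cosh (l s) from by simp [cosc]]
    · have hfun : (fun r => sinc 1 (l r)) = fun r => Real.sin (l r) := by
        funext r; norm_num [_root_.sinc]
      rw [hfun]
      convert hlds.sin using 1
      rw [show cosc 1 (l s) = Real.cos (l s) from by norm_num [cosc]]
  -- η as an explicit product function
  have hηfun : η = fun r =>
      (cosc c (l r) * (γ r).1 + sinc c (l r) * (t r).1,
       cosc c (l r) * (γ r).2.1 + sinc c (l r) * (t r).2.1,
       cosc c (l r) * (γ r).2.2 + sinc c (l r) * (t r).2.2) := by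
    funext r
    rw [hη r]
    refine Prod.ext ?_ (Prod.ext ?_ ?_) <;> simp
  have hd1 := (hcos.mul (hG1 s)).add (hsin.mul (hT1 s))
  have hd2 := (hcos.mul (hG2 s)).add (hsin.mul (hT2 s))
  have hd3 := (hcos.mul (hG3 s)).add (hsin.mul (hT3 s))
  have hηd : HasDerivAt η
      (-(c * sinc c (l s)) * deriv l s * (γ s).1 + cosc c (l s) * (t s).1
        + (cosc c (l s) * deriv l s * (t s).1 + sinc c (l s) * (deriv t s).1),
       -(c * sinc c (l s)) * deriv l s * (γ s).2.1 + cosc c (l s) * (t s).2.1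
        + (cosc c (l s) * deriv l s * (t s).2.1 + sinc c (l s) * (deriv t s).2.1),
       -(c * sinc c (l s)) * deriv l s * (γ s).2.2 + cosc c (l s) * (t s).2.2
        + (cosc c (l s) * deriv l s * (t s).2.2 + sinc c (l s) * (deriv t s).2.2)) s := by
    rw [hηfun]
    exact hd1.prodMk (hd2.prodMk hd3)
  have hmain : deriv η s =
      (-(c * sinc c (l s)) * (deriv l s + 1)) • γ s +
      (cosc c (l s) * (deriv l s + 1)) • t s +
      (k s * sinc c (l s)) • e s := by
    rw [hηd.deriv]
    refine Prod.ext ?_ (Prod.ext ?_ ?_) <;>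
      simp only [Prod.fst_add, Prod.snd_add, Prod.smul_fst, Prod.smul_snd, smul_eq_mul]
    · linear_combination (sinc c (l s))*hP1 - (k s * sinc c (l s))*he1
    · linear_combination (sinc c (l s))*hP2 - (k s * sinc c (l s))*he2
    · linear_combination (sinc c (l s))*hP3 - (k s * sinc c (l s))*he3
  refine ⟨hmain, fun hk0 hder0 => ?_⟩
  have h0 : (-(c * sinc c (l s)) * (deriv l s + 1)) • γ s +
      (cosc c (l s) * (deriv l s + 1)) • t s +
      (k s * sinc c (l s)) • e s = 0 := by rw [← hmain]; exact hder0
  have hE1 : (-(c * sinc c (l s)) * (deriv l s + 1)) * (γ s).1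
      + (cosc c (l s) * (deriv l s + 1)) * (t s).1 + (k s * sinc c (l s)) * (e s).1 = 0 := by
    have h := congrArg (fun p : ℝ × ℝ × ℝ => p.1) h0
    simp only [Prod.fst_add, Prod.smul_fst, smul_eq_mul, Prod.fst_zero] at h
    linear_combination h
  have hE2 : (-(c * sinc c (l s)) * (deriv l s + 1)) * (γ s).2.1
      + (cosc c (l s) * (deriv l s + 1)) * (t s).2.1 + (k s * sinc c (l s)) * (e s).2.1 = 0 := by
    have h := congrArg (fun p : ℝ × ℝ × ℝ => p.2.1) h0
    simp only [Prod.snd_add, Prod.fst_add, Prod.smul_snd, Prod.smul_fst, smul_eq_mul,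
      Prod.snd_zero, Prod.fst_zero] at h
    linear_combination h
  have hE3 : (-(c * sinc c (l s)) * (deriv l s + 1)) * (γ s).2.2
      + (cosc c (l s) * (deriv l s + 1)) * (t s).2.2 + (k s * sinc c (l s)) * (e s).2.2 = 0 := by
    have h := congrArg (fun p : ℝ × ℝ × ℝ => p.2.2) h0
    simp only [Prod.snd_add, Prod.smul_snd, smul_eq_mul, Prod.snd_zero] at h
    linear_combination h
  have hC : k s * sinc c (l s) = 0 :=
    coeff_e_zero c (γ s).1 (γ s).2.1 (γ s).2.2 (t s).1 (t s).2.1 (t s).2.2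
      (e s).1 (e s).2.1 (e s).2.2
      (-(c * sinc c (l s)) * (deriv l s + 1)) (cosc c (l s) * (deriv l s + 1))
      (k s * sinc c (l s)) hc2 huu' hvv' (key1 s) he1 he2 he3 hE1 hE2 hE3
  have hsin0 : sinc c (l s) = 0 := by
    rcases mul_eq_zero.mp hC with h | h
    · exact absurd h hk0
    · exact h
  refine ⟨hsin0, ?_, ?_⟩
  · rw [hη s, hsin0]; simp
  · intro hcm
    subst hcm
    have hl0 : l s = 0 := by
      have h := hsin0
      simp [_root_.sinc] at h
      exact h
    rw [hη s, hsin0, hl0]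
    norm_num [cosc]
end
end

section
/- Let α₀ = inf A and suppose s₀ ∈ ℝ satisfies G(s₀, α₀) = 0 (i.e. the α₀-evolutoid is singular at s₀). Then ∂G/∂s(s₀, α₀) = 0, equivalently ρ_{α₀}''(s₀) = 0. -/
noncomputable section

open Real

theorem minimal_singular_angle_degenerate
    (c : ℝ) (hc : c ∈ ({-1, 0, 1} : Set ℝ))
    (ℓ : ℝ) (hℓ : 0 < ℓ)
    (k : ℝ → ℝ) (hk : ContDiff ℝ (⊤ : ℕ∞) k) (hper : ∀ s, k (s + ℓ) = k s)
    (hconv₁ : c = -1 → ∀ s, 1 < k s) (hconv₂ : c ≠ -1 → ∀ s, 0 < k s)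
    (G : ℝ → ℝ → ℝ)
    (hG : ∀ s α, G s α =
      Real.cos α - Real.sin α * deriv k s / (k s ^ 2 + c * Real.sin α ^ 2))
    (A : Set ℝ)
    (hA : A = {α ∈ Set.Icc 0 (Real.pi / 2) | ∃ s, G s α = 0})
    (α₀ : ℝ) (hα₀ : α₀ = sInf A)
    (s₀ : ℝ) (hs₀ : G s₀ α₀ = 0) :
    deriv (fun s => G s α₀) s₀ = 0 := by
  have hkpos : ∀ s, 0 < k s := by
    intro s
    rcases eq_or_ne c (-1) with h | h
    · linarith [hconv₁ h s]
    · exact hconv₂ h s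
  have hD : ∀ s α, 0 < k s ^ 2 + c * Real.sin α ^ 2 := by
    intro s α
    simp only [Set.mem_insert_iff, Set.mem_singleton_iff] at hc
    rcases hc with h | h | h
    · have h1 := hconv₁ h s
      have h2 := Real.sin_sq_le_one α
      rw [h]; nlinarith
    · rw [h]; nlinarith [hkpos s]
    · rw [h]; nlinarith [hkpos s, sq_nonneg (Real.sin α)]
  have hG0 : ∀ s, G s 0 = 1 := by
    intro s; rw [hG]; simp
  have hα0ne : α₀ ≠ 0 := by
    intro h
    rw [h, hG0] at hs₀; norm_num at hs₀
  have hAne : A.Nonempty := by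
    by_contra h
    rw [Set.not_nonempty_iff_eq_empty] at h
    rw [h, Real.sInf_empty] at hα₀
    exact hα0ne hα₀
  have hbdd : BddBelow A := ⟨0, fun a ha => by rw [hA] at ha; exact ha.1.1⟩
  have hα₀nonneg : 0 ≤ α₀ :=
    hα₀ ▸ le_csInf hAne (fun a ha => by rw [hA] at ha; exact ha.1.1)
  have hα₀le : α₀ ≤ Real.pi / 2 := by
    obtain ⟨a, ha⟩ := hAne
    have h1 : α₀ ≤ a := hα₀ ▸ csInf_le hbdd ha
    rw [hA] at ha
    exact h1.trans ha.1.2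
  have hnonneg : ∀ s, 0 ≤ G s α₀ := by
    intro s₁
    by_contra hneg
    push_neg at hneg
    have hcont : ContinuousOn (fun α => G s₁ α) (Set.Icc 0 α₀) := by
      have hfe : (fun α => G s₁ α) = fun α =>
          Real.cos α - Real.sin α * deriv k s₁ / (k s₁ ^ 2 + c * Real.sin α ^ 2) := by
        funext α; exact hG s₁ α
      rw [hfe]
      apply Continuous.continuousOn
      apply Continuous.sub Real.continuous_cos
      apply Continuous.div
      · exact Real.continuous_sin.mul continuous_const
      · continuity
      · intro α; exact (hD s₁ α).ne'
    have h0 : (0:ℝ) ∈ Set.Icc (G s₁ α₀) (G s₁ 0) := ⟨hneg.le, by rw [hG0]; norm_num⟩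
    obtain ⟨α', hα'mem, hα'0⟩ := intermediate_value_Icc' hα₀nonneg hcont h0
    have hα'A : α' ∈ A := by
      rw [hA]
      exact ⟨⟨hα'mem.1, hα'mem.2.trans hα₀le⟩, s₁, hα'0⟩
    have hle : α₀ ≤ α' := hα₀ ▸ csInf_le hbdd hα'A
    have heq : α' = α₀ := le_antisymm hα'mem.2 hle
    rw [heq] at hα'0
    linarith
  have hmin : IsLocalMin (fun s => G s α₀) s₀ :=
    Filter.Eventually.of_forall (fun x => by simpa [hs₀] using hnonneg x)
  exact hmin.deriv_eq_zero
end
end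

section
/- For every differentiable r : ℝ → ℝ, the wavefront σ(s) = cos_c(r(s))·γ(s) + sin_c(r(s))·v_α(s) and the parallel-transported direction v^p(s) = −c·sin_c(r(s))·γ(s) + cos_c(r(s))·v_α(s) satisfy ⟨σ'(s), v^p(s)⟩_c = r'(s) + cos α for all s. Consequently, the front (orthogonality) condition ⟨σ'(s), v^p(s)⟩_c = 0 holds for all s if and only if r(s) = C₀ − s·cos α for some constant C₀. -/
noncomputable section

open Real

lemma ip_add_left (c : ℝ) (x y z : ℝ × ℝ × ℝ) : ip c (x + y) z = ip c x z + ip c y z := by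
  simp only [ip, Prod.fst_add, Prod.snd_add]; ring

lemma ip_add_right (c : ℝ) (x y z : ℝ × ℝ × ℝ) : ip c x (y + z) = ip c x y + ip c x z := by
  simp only [ip, Prod.fst_add, Prod.snd_add]; ring

lemma ip_smul_left (c m : ℝ) (x y : ℝ × ℝ × ℝ) : ip c (m • x) y = m * ip c x y := by
  simp only [ip, Prod.smul_fst, Prod.smul_snd, smul_eq_mul]; ring

lemma ip_smul_right (c m : ℝ) (x y : ℝ × ℝ × ℝ) : ip c x (m • y) = m * ip c x y := by
  simp only [ip, Prod.smul_fst, Prod.smul_snd, smul_eq_mul]; ring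

lemma ip_hasDerivAt {c : ℝ} {f g : ℝ → ℝ × ℝ × ℝ} {f' g' : ℝ × ℝ × ℝ} {x : ℝ}
    (hf : HasDerivAt f f' x) (hg : HasDerivAt g g' x) :
    HasDerivAt (fun s => ip c (f s) (g s)) (ip c f' (g x) + ip c (f x) g') x := by
  have hf2' : HasDerivAt (fun s => (f s).2) f'.2 x :=
    (ContinuousLinearMap.snd ℝ ℝ (ℝ × ℝ)).hasFDerivAt.comp_hasDerivAt x hf
  have hg2' : HasDerivAt (fun s => (g s).2) g'.2 x :=
    (ContinuousLinearMap.snd ℝ ℝ (ℝ × ℝ)).hasFDerivAt.comp_hasDerivAt x hg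
  have hf1 : HasDerivAt (fun s => (f s).1) f'.1 x :=
    (ContinuousLinearMap.fst ℝ ℝ (ℝ × ℝ)).hasFDerivAt.comp_hasDerivAt x hf
  have hg1 : HasDerivAt (fun s => (g s).1) g'.1 x :=
    (ContinuousLinearMap.fst ℝ ℝ (ℝ × ℝ)).hasFDerivAt.comp_hasDerivAt x hg
  have hf2 : HasDerivAt (fun s => (f s).2.1) f'.2.1 x :=
    (ContinuousLinearMap.fst ℝ ℝ ℝ).hasFDerivAt.comp_hasDerivAt x hf2'
  have hg2 : HasDerivAt (fun s => (g s).2.1) g'.2.1 x :=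
    (ContinuousLinearMap.fst ℝ ℝ ℝ).hasFDerivAt.comp_hasDerivAt x hg2'
  have hf3 : HasDerivAt (fun s => (f s).2.2) f'.2.2 x :=
    (ContinuousLinearMap.snd ℝ ℝ ℝ).hasFDerivAt.comp_hasDerivAt x hf2'
  have hg3 : HasDerivAt (fun s => (g s).2.2) g'.2.2 x :=
    (ContinuousLinearMap.snd ℝ ℝ ℝ).hasFDerivAt.comp_hasDerivAt x hg2'
  have h := (((HasDerivAt.const_mul c hf1).mul hg1).add (hf2.mul hg2)).add (hf3.mul hg3)
  refine (h : HasDerivAt (fun s => ip c (f s) (g s)) _ x).congr_deriv ?_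
  simp only [ip]; ring

lemma sinc_hasDerivAt {c : ℝ} (hc : c = -1 ∨ c = 1) (x : ℝ) :
    HasDerivAt (sinc c) (cosc c x) x := by
  rcases hc with h | h <;> subst h
  · have h1 : _root_.sinc (-1) = Real.sinh := by funext y; simp [_root_.sinc]
    have h2 : cosc (-1) x = Real.cosh x := by simp [cosc]
    rw [h1, h2]; exact Real.hasDerivAt_sinh x
  · have h1 : _root_.sinc 1 = Real.sin := by
      funext y; simp [_root_.sinc, show (1:ℝ) ≠ -1 by norm_num]
    have h2 : cosc 1 x = Real.cos x := by simp [cosc, show (1:ℝ) ≠ -1 by norm_num]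
    rw [h1, h2]; exact Real.hasDerivAt_sin x

lemma cosc_hasDerivAt {c : ℝ} (hc : c = -1 ∨ c = 1) (x : ℝ) :
    HasDerivAt (cosc c) (-(c * sinc c x)) x := by
  rcases hc with h | h <;> subst h
  · have h1 : cosc (-1) = Real.cosh := by funext y; simp [cosc]
    have h2 : -((-1 : ℝ) * _root_.sinc (-1) x) = Real.sinh x := by simp [_root_.sinc]
    rw [h1, h2]; exact Real.hasDerivAt_cosh x
  · have h1 : cosc 1 = Real.cos := by
      funext y; simp [cosc, show (1:ℝ) ≠ -1 by norm_num]
    have h2 : -((1 : ℝ) * _root_.sinc 1 x) = -Real.sin x := by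
      simp [_root_.sinc, show (1:ℝ) ≠ -1 by norm_num]
    rw [h1, h2]; exact Real.hasDerivAt_cos x

lemma cosc_sq_add {c : ℝ} (hc : c = -1 ∨ c = 1) (x : ℝ) :
    cosc c x ^ 2 + c * sinc c x ^ 2 = 1 := by
  rcases hc with h | h <;> subst h
  · rw [show cosc (-1) x = Real.cosh x by simp [cosc],
      show _root_.sinc (-1) x = Real.sinh x by simp [_root_.sinc]]
    have := Real.cosh_sq_sub_sinh_sq x
    linarith
  · rw [show cosc 1 x = Real.cos x by simp [cosc, show (1:ℝ) ≠ -1 by norm_num],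
      show _root_.sinc 1 x = Real.sin x by simp [_root_.sinc, show (1:ℝ) ≠ -1 by norm_num]]
    have := Real.sin_sq_add_cos_sq x
    linarith

theorem wavefront_orthogonality_condition
    (c : ℝ) (hc : c ∈ ({-1, 1} : Set ℝ))
    (γ : ℝ → ℝ × ℝ × ℝ) (hγ : ContDiff ℝ (⊤ : ℕ∞) γ)
    (hγM : ∀ s, ip c (γ s) (γ s) = c)
    (hunit : ∀ s, ip c (deriv γ s) (deriv γ s) = 1)
    (t : ℝ → ℝ × ℝ × ℝ) (ht : t = deriv γ)
    (e : ℝ → ℝ × ℝ × ℝ) (he : ∀ s, e s = wedge c (γ s) (t s))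
    (k : ℝ → ℝ) (hk : ∀ s, k s = ip c (deriv (deriv γ) s) (e s))
    (α : ℝ) (hα : α ∈ Set.Icc 0 (Real.pi / 2))
    (a b : ℝ) (ha : a = Real.cos α) (hb : b = Real.sin α)
    (v : ℝ → ℝ × ℝ × ℝ) (hv : ∀ s, v s = a • t s + b • e s)
    (r : ℝ → ℝ) (hr : Differentiable ℝ r)
    (σ : ℝ → ℝ × ℝ × ℝ)
    (hσ : ∀ s, σ s = cosc c (r s) • γ s + sinc c (r s) • v s)
    (vp : ℝ → ℝ × ℝ × ℝ)
    (hvp : ∀ s, vp s = (-(c * sinc c (r s))) • γ s + cosc c (r s) • v s) :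
    (∀ s, ip c (deriv σ s) (vp s) = deriv r s + Real.cos α) ∧
    ((∀ s, ip c (deriv σ s) (vp s) = 0) ↔
      ∃ C₀ : ℝ, ∀ s, r s = C₀ - s * Real.cos α) := by
  have hcc : c = -1 ∨ c = 1 := by simpa using hc
  have hc2 : c ^ 2 = 1 := by rcases hcc with h | h <;> rw [h] <;> norm_num
  -- differentiability
  have hγd : Differentiable ℝ γ := hγ.differentiable (by simp)
  have hgi : ContDiff ℝ ((⊤ : ℕ∞) : WithTop ℕ∞) γ := hγ.of_le (by simp)
  have htd : Differentiable ℝ t := by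
    rw [ht]; exact (contDiff_infty_iff_deriv.mp (contDiff_infty_iff_deriv.mp hgi).2).1
  have hγ1 : Differentiable ℝ (fun s => (γ s).1) := hγd.fst
  have hγ2 : Differentiable ℝ (fun s => (γ s).2.1) := hγd.snd.fst
  have hγ3 : Differentiable ℝ (fun s => (γ s).2.2) := hγd.snd.snd
  have ht1 : Differentiable ℝ (fun s => (t s).1) := htd.fst
  have ht2 : Differentiable ℝ (fun s => (t s).2.1) := htd.snd.fst
  have ht3 : Differentiable ℝ (fun s => (t s).2.2) := htd.snd.snd
  have hed : Differentiable ℝ e := by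
    have hef : e = fun s => wedge c (γ s) (t s) := funext he
    rw [hef]
    unfold wedge
    exact (((hγ2.mul ht3).sub (hγ3.mul ht2)).const_mul c).prodMk
      ((((hγ3.mul ht1).sub (hγ1.mul ht3))).prodMk ((hγ1.mul ht2).sub (hγ2.mul ht1)))
  have hvd : Differentiable ℝ v := by
    have hvf : v = fun s => a • t s + b • e s := funext hv
    rw [hvf]
    exact (htd.const_smul a).add (hed.const_smul b)
  have hγt' : ∀ u, HasDerivAt γ (t u) u := by
    intro u; rw [ht]; exact (hγd u).hasDerivAt
  -- basic inner product facts
  have hγt : ∀ u, ip c (γ u) (t u) = 0 := by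
    intro u
    have h1 : HasDerivAt (fun s => ip c (γ s) (γ s)) (ip c (t u) (γ u) + ip c (γ u) (t u)) u :=
      ip_hasDerivAt (hγt' u) (hγt' u)
    have h2 : (fun s => ip c (γ s) (γ s)) = fun _ => c := funext hγM
    rw [h2] at h1
    have h3 := h1.unique (hasDerivAt_const u c)
    have h4 := ip_comm c (t u) (γ u)
    linarith [h3, h4]
  have htt : ∀ u, ip c (t u) (t u) = 1 := by intro u; rw [ht]; exact hunit u
  have hγe : ∀ u, ip c (γ u) (e u) = 0 := by
    intro u
    rcases hcc with h | h <;> subst h <;> rw [he u] <;> simp only [ip, wedge] <;> ring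
  have hte : ∀ u, ip c (t u) (e u) = 0 := by
    intro u
    rcases hcc with h | h <;> subst h <;> rw [he u] <;> simp only [ip, wedge] <;> ring
  have hee : ∀ u, ip c (e u) (e u) = 1 := by
    intro u
    have hkey : ip c (e u) (e u) =
        c * (ip c (γ u) (γ u) * ip c (t u) (t u) - ip c (γ u) (t u) ^ 2) := by
      rcases hcc with h | h <;> subst h <;> rw [he u] <;> simp only [ip, wedge] <;> ring
    rw [hkey, hγM u, htt u, hγt u]
    linear_combination hc2
  have hγv : ∀ u, ip c (γ u) (v u) = 0 := by
    intro u
    rw [hv u]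
    simp only [ip_add_right, ip_smul_right]
    rw [hγt u, hγe u]; ring
  have htv : ∀ u, ip c (t u) (v u) = a := by
    intro u
    rw [hv u]
    simp only [ip_add_right, ip_smul_right]
    rw [htt u, hte u]; ring
  have hab : a ^ 2 + b ^ 2 = 1 := by
    rw [ha, hb]; have := Real.sin_sq_add_cos_sq α; linarith
  have het : ∀ u, ip c (e u) (t u) = 0 := by
    intro u; rw [ip_comm]; exact hte u
  have hvv : ∀ u, ip c (v u) (v u) = 1 := by
    intro u
    rw [hv u]
    simp only [ip_add_left, ip_add_right, ip_smul_left, ip_smul_right]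
    rw [htt u, hte u, het u, hee u]
    linear_combination hab
  -- key identity
  have key : ∀ s, ip c (deriv σ s) (vp s) = deriv r s + Real.cos α := by
    intro s
    have hvs : HasDerivAt v (deriv v s) s := (hvd s).hasDerivAt
    have hrs : HasDerivAt r (deriv r s) s := (hr s).hasDerivAt
    -- derivative facts for v
    have hv'γ : ip c (deriv v s) (γ s) = -a := by
      have h1 : HasDerivAt (fun u => ip c (v u) (γ u))
          (ip c (deriv v s) (γ s) + ip c (v s) (t s)) s :=
        ip_hasDerivAt hvs (hγt' s)
      have h2 : (fun u => ip c (v u) (γ u)) = fun _ => (0:ℝ) := by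
        funext u; rw [ip_comm]; exact hγv u
      rw [h2] at h1
      have h3 := h1.unique (hasDerivAt_const s 0)
      have h4 : ip c (v s) (t s) = a := by rw [ip_comm]; exact htv s
      linarith
    have hv'v : ip c (deriv v s) (v s) = 0 := by
      have h1 : HasDerivAt (fun u => ip c (v u) (v u))
          (ip c (deriv v s) (v s) + ip c (v s) (deriv v s)) s :=
        ip_hasDerivAt hvs hvs
      have h2 : (fun u => ip c (v u) (v u)) = fun _ => (1:ℝ) := funext hvv
      rw [h2] at h1
      have h3 := h1.unique (hasDerivAt_const s 1)
      have h4 := ip_comm c (deriv v s) (v s)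
      linarith
    -- derivative of σ
    have hcosr : HasDerivAt (fun u => cosc c (r u)) (-(c * sinc c (r s)) * deriv r s) s :=
      (cosc_hasDerivAt hcc (r s)).comp s hrs
    have hsinr : HasDerivAt (fun u => sinc c (r u)) (cosc c (r s) * deriv r s) s :=
      (sinc_hasDerivAt hcc (r s)).comp s hrs
    have hσs : HasDerivAt σ
        (cosc c (r s) • t s + (-(c * sinc c (r s)) * deriv r s) • γ s +
          (sinc c (r s) • deriv v s + (cosc c (r s) * deriv r s) • v s)) s := by
      have hσf : σ = fun u => cosc c (r u) • γ u + sinc c (r u) • v u := funext hσ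
      rw [hσf]
      exact (hcosr.smul (hγt' s)).add (hsinr.smul hvs)
    have htγ : ip c (t s) (γ s) = 0 := by rw [ip_comm]; exact hγt s
    have hvγ : ip c (v s) (γ s) = 0 := by rw [ip_comm]; exact hγv s
    rw [hσs.deriv, hvp s]
    simp only [ip_add_left, ip_add_right, ip_smul_left, ip_smul_right]
    rw [hγM s, hγv s, htγ, htv s, hvγ, hvv s, hv'γ, hv'v]
    have hpy := cosc_sq_add hcc (r s)
    rw [← ha]
    linear_combination (deriv r s + a) * hpy + deriv r s * sinc c (r s) ^ 2 * c * hc2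
  refine ⟨key, ?_, ?_⟩
  · intro h0
    refine ⟨r 0, fun s => ?_⟩
    have hderiv : ∀ u, deriv r u = -Real.cos α := by
      intro u; have h1 := key u; rw [h0 u] at h1; linarith
    have hdg : Differentiable ℝ (fun u => r u + u * Real.cos α) :=
      hr.add (differentiable_id.mul_const _)
    have hz : ∀ x, deriv (fun u => r u + u * Real.cos α) x = 0 := by
      intro x
      have h1 : HasDerivAt (fun u => r u + u * Real.cos α) (deriv r x + 1 * Real.cos α) x :=
        (hr x).hasDerivAt.add ((hasDerivAt_id x).mul_const _)
      rw [h1.deriv, hderiv x]; ring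
    have h2 := is_const_of_deriv_eq_zero hdg hz s 0
    simp only [zero_mul, add_zero] at h2
    linarith
  · rintro ⟨C₀, hC⟩ s
    rw [key s]
    have hrf : r = fun u => C₀ - u * Real.cos α := funext hC
    have h1 : HasDerivAt r (0 - 1 * Real.cos α) s := by
      rw [hrf]
      exact (hasDerivAt_const s C₀).sub ((hasDerivAt_id s).mul_const _)
    rw [h1.deriv]; ring
end
end
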